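/- arXiv:1312.5291 — 6 statements merged into one kernel-verified Lean document; each statement's English description precedes it below -/
import Mathlib

section
/- Let S : [0,1] → ℝ^{n×n} be a smooth path of symmetric matrices, and for t ∈ (0,1] let m(t) be the dimension of the space of functions u ∈ C²([0,1],ℝⁿ) satisfying u''(x) + S(x)u(x) = 0, u(0) = 0 and u(t) = 0. If m(1) = 0, then the set {t ∈ (0,1] : m(t) > 0} of conjugate instants is finite. -/
open Set RealInnerProductSpace

noncomputable section

variable {n : ℕ}

/-- The space of solutions `u` of the Jacobi-type boundary value problem
`u'' + S u = 0` on `[0, T]`, `u 0 = 0`, `u t = 0`, realized as functions `ℝ → ℝⁿ`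
that are determined by their restriction to `[0, T]` (clamping condition). -/
def jacobiSolutions (S : ℝ → (EuclideanSpace ℝ (Fin n) →L[ℝ] EuclideanSpace ℝ (Fin n)))
    (T : ℝ) (hT : 0 < T) (t : ℝ) : Submodule ℝ (ℝ → EuclideanSpace ℝ (Fin n)) where
  carrier := {u | (∀ x : ℝ, u x = u (min (max x 0) T)) ∧
      ContDiffOn ℝ 2 u (Icc 0 T) ∧
      (∀ x ∈ Icc (0:ℝ) T,
        derivWithin (derivWithin u (Icc 0 T)) (Icc 0 T) x + S x (u x) = 0) ∧
      u 0 = 0 ∧ u t = 0}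
  zero_mem' := by
    refine ⟨fun x => rfl, contDiffOn_const, fun x hx => ?_, rfl, rfl⟩
    have hI : UniqueDiffOn ℝ (Icc (0:ℝ) T) := uniqueDiffOn_Icc hT
    have h1 : ∀ y ∈ Icc (0:ℝ) T, derivWithin (fun _ : ℝ => (0 : EuclideanSpace ℝ (Fin n)))
        (Icc 0 T) y = 0 := fun y _ => by simp
    have h2 : derivWithin (derivWithin (fun _ : ℝ => (0 : EuclideanSpace ℝ (Fin n))) (Icc 0 T))
        (Icc 0 T) x = derivWithin (fun _ : ℝ => (0 : EuclideanSpace ℝ (Fin n))) (Icc 0 T) x :=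
      derivWithin_congr h1 (h1 x hx)
    show derivWithin (derivWithin (fun _ : ℝ => (0 : EuclideanSpace ℝ (Fin n))) (Icc 0 T))
        (Icc 0 T) x + S x 0 = 0
    rw [h2, h1 x hx, map_zero, add_zero]
  add_mem' := by
    rintro u v ⟨hu0, hu1, hu2, hu3, hu4⟩ ⟨hv0, hv1, hv2, hv3, hv4⟩
    have hI : UniqueDiffOn ℝ (Icc (0:ℝ) T) := uniqueDiffOn_Icc hT
    have hud : DifferentiableOn ℝ u (Icc 0 T) := hu1.differentiableOn (by norm_num)
    have hvd : DifferentiableOn ℝ v (Icc 0 T) := hv1.differentiableOn (by norm_num)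
    have hud' : DifferentiableOn ℝ (derivWithin u (Icc 0 T)) (Icc 0 T) :=
      (hu1.derivWithin hI (one_add_one_eq_two.le : (1 : WithTop ℕ∞) + 1 ≤ 2)).differentiableOn one_ne_zero
    have hvd' : DifferentiableOn ℝ (derivWithin v (Icc 0 T)) (Icc 0 T) :=
      (hv1.derivWithin hI (one_add_one_eq_two.le : (1 : WithTop ℕ∞) + 1 ≤ 2)).differentiableOn one_ne_zero
    refine ⟨fun x => by simp only [Pi.add_apply, ← hu0 x, ← hv0 x],
      hu1.add hv1, fun x hx => ?_, by simp [hu3, hv3], by simp [hu4, hv4]⟩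
    have h1 : ∀ y ∈ Icc (0:ℝ) T, derivWithin (u + v) (Icc 0 T) y
        = derivWithin u (Icc 0 T) y + derivWithin v (Icc 0 T) y := fun y hy =>
      derivWithin_add (hud y hy) (hvd y hy)
    have h2 : derivWithin (derivWithin (u + v) (Icc 0 T)) (Icc 0 T) x
        = derivWithin (fun y => derivWithin u (Icc 0 T) y + derivWithin v (Icc 0 T) y)
          (Icc 0 T) x := derivWithin_congr h1 (h1 x hx)
    have h3 : derivWithin (fun y => derivWithin u (Icc 0 T) y + derivWithin v (Icc 0 T) y)
        (Icc 0 T) x = derivWithin (derivWithin u (Icc 0 T)) (Icc 0 T) x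
          + derivWithin (derivWithin v (Icc 0 T)) (Icc 0 T) x :=
      derivWithin_add (hud' x hx) (hvd' x hx)
    show derivWithin (derivWithin (u + v) (Icc 0 T)) (Icc 0 T) x + S x (u x + v x) = 0
    rw [h2, h3, map_add]
    abel_nf
    linear_combination (norm := module) hu2 x hx + hv2 x hx
  smul_mem' := by
    rintro c u ⟨hu0, hu1, hu2, hu3, hu4⟩
    have hI : UniqueDiffOn ℝ (Icc (0:ℝ) T) := uniqueDiffOn_Icc hT
    have hud : DifferentiableOn ℝ u (Icc 0 T) := hu1.differentiableOn (by norm_num)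
    have hud' : DifferentiableOn ℝ (derivWithin u (Icc 0 T)) (Icc 0 T) :=
      (hu1.derivWithin hI (one_add_one_eq_two.le : (1 : WithTop ℕ∞) + 1 ≤ 2)).differentiableOn one_ne_zero
    refine ⟨fun x => by simp only [Pi.smul_apply, ← hu0 x],
      hu1.const_smul c, fun x hx => ?_, by simp [hu3], by simp [hu4]⟩
    have h1 : ∀ y ∈ Icc (0:ℝ) T, derivWithin (c • u) (Icc 0 T) y
        = c • derivWithin u (Icc 0 T) y := fun y hy =>
      derivWithin_const_smul c (hud y hy)
    have h2 : derivWithin (derivWithin (c • u) (Icc 0 T)) (Icc 0 T) x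
        = derivWithin (fun y => c • derivWithin u (Icc 0 T) y) (Icc 0 T) x :=
      derivWithin_congr h1 (h1 x hx)
    have h3 : derivWithin (fun y => c • derivWithin u (Icc 0 T) y) (Icc 0 T) x
        = c • derivWithin (derivWithin u (Icc 0 T)) (Icc 0 T) x :=
      derivWithin_const_smul c (hud' x hx)
    show derivWithin (derivWithin (c • u) (Icc 0 T)) (Icc 0 T) x + S x (c • u x) = 0
    rw [h2, h3, map_smul]
    have := hu2 x hx
    rw [← smul_add, this, smul_zero]

/-- The multiplicity `m t` of an instant `t`: the dimension of the space of solutions of the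
Jacobi equation `u'' + S u = 0` on `[0,1]` with `u 0 = 0` and `u t = 0`. -/
def conjMult (S : ℝ → (EuclideanSpace ℝ (Fin n) →L[ℝ] EuclideanSpace ℝ (Fin n))) (t : ℝ) : ℕ∞ :=
  (Module.rank ℝ ↥(jacobiSolutions S 1 one_pos t)).toENat


/-! Let `V` be the space of Jacobi fields with `u 0 = 0`, normed by `‖u'(0)‖`, and fix
`t₀ ∈ [0,1]`. Writing `A = u ↦ u t₀` and `B = u ↦ u'(t₀)`, Taylor's formula gives
`u t = A u + (t - t₀) B u + O((t - t₀)²) ‖u‖` uniformly on `V`. Uniqueness for the ODE says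
`ker A ∩ ker B = 0`, and the constancy of the Wronskian `⟪u, w'⟫ - ⟪u', w⟫` (which needs `S`
symmetric) says `A V ⊥ B (ker A)`. These two facts force `‖A u + h B u‖ ≥ c |h| ‖u‖` for small
`h`, so `u ↦ u t` is injective for `t ≠ t₀` close to `t₀`: conjugate instants are isolated, hence
finite in the compact interval `[0,1]`. -/

open Filter Topology

local notation "I" => Icc (0 : ℝ) 1

section IsotropicPencil

variable {V E : Type*} [NormedAddCommGroup V] [NormedSpace ℝ V] [FiniteDimensional ℝ V]
  [NormedAddCommGroup E] [InnerProductSpace ℝ E]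

theorem exists_lower_bound_add_smul (A B : V →ₗ[ℝ] E)
    (horth : ∀ v z, A z = 0 → ⟪A v, B z⟫ = 0) (hker : ∀ v, A v = 0 → B v = 0 → v = 0) :
    ∃ c > 0, ∃ K, ∀ (h : ℝ) (v : V),
      c * |h| * ‖v‖ ≤ (1 + |h|) * ‖A v + h • B v‖ + K * h ^ 2 * ‖v‖ := by
  -- The orthogonal projection `π` onto `B (ker A)` kills `A v`, so that
  -- `π (A v + h • B v) = h • π (B v)`, while `v ↦ (A v, π (B v))` is injective.
  set N := (LinearMap.ker A).map B
  have hπA : ∀ v, N.starProjection (A v) = 0 := by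
    refine fun v => (N.starProjection_apply_eq_zero_iff).2 ?_
    rintro _ ⟨z, hz, rfl⟩
    rw [real_inner_comm]
    exact horth v z hz
  set T : V →ₗ[ℝ] E × E := A.prod (N.starProjection.toLinearMap ∘ₗ B)
  have hT : LinearMap.ker T = ⊥ := by
    refine LinearMap.ker_eq_bot'.2 fun v hv => ?_
    have hAv : A v = 0 := congrArg Prod.fst hv
    have hBv : B v ∈ N := ⟨v, hAv, rfl⟩
    refine hker v hAv ?_
    rw [← Submodule.starProjection_eq_self_iff.2 hBv]
    exact congrArg Prod.snd hv
  obtain ⟨K, -, hK⟩ := T.exists_antilipschitzWith hT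
  obtain ⟨c, hc, hcT⟩ := antilipschitzWith_iff_exists_mul_le_norm.1 ⟨K, hK⟩
  set B' := LinearMap.toContinuousLinearMap B
  refine ⟨c, hc, ‖B'‖, fun h v => ?_⟩
  set w := A v + h • B v
  have hA : ‖A v‖ ≤ ‖w‖ + |h| * (‖B'‖ * ‖v‖) := by
    calc ‖A v‖ = ‖w - h • B v‖ := by rw [add_sub_cancel_right]
    _ ≤ ‖w‖ + |h| * ‖B' v‖ := by rw [← Real.norm_eq_abs, ← norm_smul]; exact norm_sub_le _ _
    _ ≤ ‖w‖ + |h| * (‖B'‖ * ‖v‖) := by gcongr; exact B'.le_opNorm v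
  have hπB : |h| * ‖N.starProjection (B v)‖ ≤ ‖w‖ := by
    calc |h| * ‖N.starProjection (B v)‖ = ‖N.starProjection w‖ := by
          rw [map_add, hπA, zero_add, map_smul, norm_smul, Real.norm_eq_abs]
    _ ≤ ‖w‖ := N.norm_starProjection_apply_le w
  have hcv : c * ‖v‖ ≤ ‖A v‖ + ‖N.starProjection (B v)‖ :=
    (hcT v).trans (max_le_add_of_nonneg (norm_nonneg _) (norm_nonneg _))
  calc c * |h| * ‖v‖ = |h| * (c * ‖v‖) := by ring
  _ ≤ |h| * (‖A v‖ + ‖N.starProjection (B v)‖) := mul_le_mul_of_nonneg_left hcv (abs_nonneg h)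
  _ ≤ |h| * (‖w‖ + |h| * (‖B'‖ * ‖v‖)) + ‖w‖ := by rw [mul_add]; gcongr
  _ = (1 + |h|) * ‖w‖ + ‖B'‖ * h ^ 2 * ‖v‖ := by rw [← sq_abs h]; ring

theorem eventually_injective_of_taylor (f : ℝ → V →ₗ[ℝ] E) (B : V →ₗ[ℝ] E) {t₀ C : ℝ}
    {s : Set ℝ} (horth : ∀ v z, f t₀ z = 0 → ⟪f t₀ v, B z⟫ = 0)
    (hker : ∀ v, f t₀ v = 0 → B v = 0 → v = 0)
    (htaylor : ∀ t ∈ s, ∀ v, ‖f t v - f t₀ v - (t - t₀) • B v‖ ≤ C * (t - t₀) ^ 2 * ‖v‖) :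
    ∀ᶠ t in 𝓝[≠] t₀, t ∈ s → Function.Injective (f t) := by
  obtain ⟨c, hc, K, hbound⟩ := exists_lower_bound_add_smul (f t₀) B horth hker
  have hsmall : ∀ᶠ t in 𝓝 t₀, |t - t₀| * ((1 + |t - t₀|) * C + K) < c := by
    refine ContinuousAt.eventually_lt (by fun_prop) continuousAt_const ?_
    simpa using hc
  filter_upwards [nhdsWithin_le_nhds hsmall, self_mem_nhdsWithin] with t hct hne hts
  refine (injective_iff_map_eq_zero _).2 fun v hv => norm_le_zero_iff.1 ?_
  have hr := htaylor t hts v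
  rw [hv, zero_sub, ← neg_add', norm_neg] at hr
  have hh : 0 < |t - t₀| := abs_pos.2 (sub_ne_zero.2 hne)
  by_contra! hv_pos
  have := calc c * |t - t₀| * ‖v‖
      ≤ (1 + |t - t₀|) * ‖f t₀ v + (t - t₀) • B v‖ + K * (t - t₀) ^ 2 * ‖v‖ := hbound _ v
    _ ≤ (1 + |t - t₀|) * (C * (t - t₀) ^ 2 * ‖v‖) + K * (t - t₀) ^ 2 * ‖v‖ := by gcongr
    _ = |t - t₀| * ((1 + |t - t₀|) * C + K) * (|t - t₀| * ‖v‖) := by rw [← sq_abs]; ring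
    _ < c * (|t - t₀| * ‖v‖) := by gcongr
  linarith

end IsotropicPencil

theorem norm_sub_sub_smul_le_of_norm_deriv2_le {F : Type*} [NormedAddCommGroup F]
    [NormedSpace ℝ F] {f f' f'' : ℝ → F} {s : Set ℝ} {C x y : ℝ} (hs : Convex ℝ s)
    (hf : ∀ z ∈ s, HasDerivWithinAt f (f' z) s z)
    (hf' : ∀ z ∈ s, HasDerivWithinAt f' (f'' z) s z)
    (hC : ∀ z ∈ s, ‖f'' z‖ ≤ C) (hx : x ∈ s) (hy : y ∈ s) :
    ‖f y - f x - (y - x) • f' x‖ ≤ C * (y - x) ^ 2 := by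
  have hxy : uIcc x y ⊆ s := by
    rw [← segment_eq_uIcc]; exact hs.segment_subset hx hy
  have hx' : x ∈ uIcc x y := left_mem_uIcc
  have hf'_lip : ∀ z ∈ uIcc x y, ‖f' z - f' x‖ ≤ C * |y - x| := fun z hz => by
    calc ‖f' z - f' x‖ ≤ C * ‖z - x‖ :=
          (convex_uIcc x y).norm_image_sub_le_of_norm_hasDerivWithin_le
            (fun w hw => (hf' w (hxy hw)).mono hxy) (fun w hw => hC w (hxy hw)) hx' hz
    _ ≤ C * |y - x| := by
        gcongr
        · exact (norm_nonneg _).trans (hC x hx)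
        · exact abs_sub_left_of_mem_uIcc hz
  have hg : ∀ z ∈ uIcc x y, HasDerivWithinAt (fun w => f w - (w - x) • f' x)
      (f' z - f' x) (uIcc x y) z := fun z hz => by
    have := ((hasDerivWithinAt_id z (uIcc x y)).sub_const x).smul_const (f' x)
    rw [one_smul] at this
    exact ((hf z (hxy hz)).mono hxy).sub this
  have := (convex_uIcc x y).norm_image_sub_le_of_norm_hasDerivWithin_le hg hf'_lip hx'
    right_mem_uIcc
  rwa [sub_self, zero_smul, sub_zero, sub_right_comm, Real.norm_eq_abs, mul_assoc, ← sq,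
    sq_abs] at this

section JacobiEquation

variable {E : Type*} [NormedAddCommGroup E] [NormedSpace ℝ E] {S : ℝ → E →L[ℝ] E}
  {u : ℝ → E} {M x : ℝ}

def IsJacobiSolution (S : ℝ → E →L[ℝ] E) (u : ℝ → E) : Prop :=
  ContDiffOn ℝ 2 u I ∧ ∀ x ∈ I, derivWithin (derivWithin u I) I x + S x (u x) = 0

def jacobiGenerator (S : ℝ → E →L[ℝ] E) (x : ℝ) : E × E →L[ℝ] E × E :=
  (ContinuousLinearMap.snd ℝ E E).prod (-((S x).comp (ContinuousLinearMap.fst ℝ E E)))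

theorem norm_jacobiGenerator_apply_le (hM : ‖S x‖ ≤ M) (p : E × E) :
    ‖jacobiGenerator S x p‖ ≤ max 1 M * ‖p‖ := by
  refine max_le ?_ ?_
  · exact (norm_snd_le p).trans (le_mul_of_one_le_left (norm_nonneg p) (le_max_left 1 M))
  · calc ‖-(S x p.1)‖ ≤ ‖S x‖ * ‖p‖ := by
          rw [norm_neg]; exact (S x).le_opNorm_of_le (norm_fst_le p)
    _ ≤ max 1 M * ‖p‖ := by gcongr; exact hM.trans (le_max_right 1 M)

def phase (u : ℝ → E) (x : ℝ) : E × E := (u x, derivWithin u I x)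

namespace IsJacobiSolution

variable (hu : IsJacobiSolution S u)
include hu

theorem hasDerivWithinAt (hx : x ∈ I) : HasDerivWithinAt u (derivWithin u I x) I x :=
  (hu.1.differentiableOn two_ne_zero x hx).hasDerivWithinAt

theorem contDiffOn_derivWithin : ContDiffOn ℝ 1 (derivWithin u I) I :=
  hu.1.derivWithin (uniqueDiffOn_Icc one_pos) (by norm_num)

theorem hasDerivWithinAt_derivWithin (hx : x ∈ I) :
    HasDerivWithinAt (derivWithin u I) (-S x (u x)) I x := by
  rw [← eq_neg_of_add_eq_zero_left (hu.2 x hx)]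
  exact (hu.contDiffOn_derivWithin.differentiableOn one_ne_zero x hx).hasDerivWithinAt

theorem continuousOn_phase : ContinuousOn (phase u) I :=
  hu.1.continuousOn.prodMk hu.contDiffOn_derivWithin.continuousOn

theorem hasDerivWithinAt_phase (hx : x ∈ I) :
    HasDerivWithinAt (phase u) (jacobiGenerator S x (phase u x)) I x :=
  (hu.hasDerivWithinAt hx).prodMk (hu.hasDerivWithinAt_derivWithin hx)

theorem norm_phase_le (hM : ∀ x ∈ I, ‖S x‖ ≤ M) (hx : x ∈ I) :
    ‖phase u x‖ ≤ ‖phase u 0‖ * Real.exp (max 1 M) := by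
  have hgron := norm_le_gronwallBound_of_norm_deriv_right_le (ε := 0) hu.continuousOn_phase
    (fun t ht => (hu.hasDerivWithinAt_phase (Ico_subset_Icc_self ht)).mono_of_mem_nhdsWithin
      (Icc_mem_nhdsGE_of_mem ht)) le_rfl
    (fun t ht => by
      rw [add_zero]; exact norm_jacobiGenerator_apply_le (hM t (Ico_subset_Icc_self ht)) _)
    x hx
  rw [gronwallBound_ε0, sub_zero] at hgron
  refine hgron.trans (mul_le_mul_of_nonneg_left (Real.exp_le_exp.2 ?_) (norm_nonneg _))
  exact mul_le_of_le_one_right (zero_le_one.trans (le_max_left 1 M)) hx.2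

theorem phase_eq_zero (hM : ∀ x ∈ I, ‖S x‖ ≤ M) {t₀ : ℝ} (ht₀ : t₀ ∈ I)
    (h₀ : phase u t₀ = 0) (hx : x ∈ I) : phase u x = 0 := by
  have hlip : ∀ t ∈ I, LipschitzOnWith (max 1 M).toNNReal (jacobiGenerator S t) univ :=
    fun t ht => (AddMonoidHomClass.lipschitz_of_bound _ _
      (norm_jacobiGenerator_apply_le (hM t ht))).lipschitzOnWith
  have hzero : ∀ t (s : Set ℝ),
      HasDerivWithinAt (fun _ => (0 : E × E)) (jacobiGenerator S t 0) s t := fun t s => by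
    rw [map_zero]; exact hasDerivWithinAt_const t s 0
  rcases le_total x t₀ with hxt | htx
  · refine ODE_solution_unique_of_mem_Icc_left (v := fun t => jacobiGenerator S t)
      (s := fun _ => univ) (fun t ht => hlip t ⟨ht.1.le, ht.2.trans ht₀.2⟩)
      (hu.continuousOn_phase.mono (Icc_subset_Icc_right ht₀.2))
      (fun t ht => (hu.hasDerivWithinAt_phase ⟨ht.1.le, ht.2.trans ht₀.2⟩).mono_of_mem_nhdsWithin
        (Icc_mem_nhdsLE_of_mem ⟨ht.1, ht.2.trans ht₀.2⟩))
      (fun _ _ => trivial) continuousOn_const (fun t _ => hzero t _) (fun _ _ => trivial) h₀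
      ⟨hx.1, hxt⟩
  · refine ODE_solution_unique_of_mem_Icc_right (v := fun t => jacobiGenerator S t)
      (s := fun _ => univ) (fun t ht => hlip t ⟨ht₀.1.trans ht.1, ht.2.le⟩)
      (hu.continuousOn_phase.mono (Icc_subset_Icc_left ht₀.1))
      (fun t ht => (hu.hasDerivWithinAt_phase ⟨ht₀.1.trans ht.1, ht.2.le⟩).mono_of_mem_nhdsWithin
        (Icc_mem_nhdsGE_of_mem ⟨ht₀.1.trans ht.1, ht.2⟩))
      (fun _ _ => trivial) continuousOn_const (fun t _ => hzero t _) (fun _ _ => trivial) h₀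
      ⟨htx, hx.2⟩

theorem norm_sub_sub_smul_le (hM : ∀ x ∈ I, ‖S x‖ ≤ M) (hu0 : u 0 = 0) {t₀ t : ℝ}
    (ht₀ : t₀ ∈ I) (ht : t ∈ I) :
    ‖u t - u t₀ - (t - t₀) • derivWithin u I t₀‖ ≤
      M * Real.exp (max 1 M) * (t - t₀) ^ 2 * ‖derivWithin u I 0‖ := by
  have hphase0 : ‖phase u 0‖ = ‖derivWithin u I 0‖ := by simp [phase, hu0]
  have hbound : ∀ x ∈ I, ‖-S x (u x)‖ ≤ M * Real.exp (max 1 M) * ‖derivWithin u I 0‖ :=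
    fun x hx => by
      have hM0 : 0 ≤ M := (norm_nonneg _).trans (hM x hx)
      calc ‖-S x (u x)‖ ≤ ‖S x‖ * ‖phase u x‖ := by
            rw [norm_neg]; exact (S x).le_opNorm_of_le (norm_fst_le (phase u x))
      _ ≤ M * (‖derivWithin u I 0‖ * Real.exp (max 1 M)) := by
            rw [← hphase0]; gcongr; exacts [hM x hx, hu.norm_phase_le hM hx]
      _ = M * Real.exp (max 1 M) * ‖derivWithin u I 0‖ := by ring
  calc _ ≤ M * Real.exp (max 1 M) * ‖derivWithin u I 0‖ * (t - t₀) ^ 2 :=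
        norm_sub_sub_smul_le_of_norm_deriv2_le (convex_Icc 0 1) (fun _ => hu.hasDerivWithinAt)
          (fun _ => hu.hasDerivWithinAt_derivWithin) hbound ht₀ ht
  _ = _ := by ring

end IsJacobiSolution

theorem IsJacobiSolution.inner_derivWithin_comm {E : Type*} [NormedAddCommGroup E]
    [InnerProductSpace ℝ E] {S : ℝ → E →L[ℝ] E} {u w : ℝ → E} (hu : IsJacobiSolution S u)
    (hw : IsJacobiSolution S w) (hsym : ∀ x ∈ I, (S x : E →ₗ[ℝ] E).IsSymmetric)
    (hu0 : u 0 = 0) (hw0 : w 0 = 0) {t : ℝ} (ht : t ∈ I) :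
    ⟪u t, derivWithin w I t⟫ = ⟪derivWithin u I t, w t⟫ := by
  set g : ℝ → ℝ := fun x => ⟪u x, derivWithin w I x⟫ - ⟪derivWithin u I x, w x⟫
  have hg : ∀ x ∈ I, HasDerivWithinAt g 0 I x := fun x hx => by
    refine (((hu.hasDerivWithinAt hx).inner ℝ (hw.hasDerivWithinAt_derivWithin hx)).sub
      ((hu.hasDerivWithinAt_derivWithin hx).inner ℝ (hw.hasDerivWithinAt hx))).congr_deriv ?_
    have hSsymm : ⟪S x (u x), w x⟫ = ⟪u x, S x (w x)⟫ := hsym x hx (u x) (w x)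
    rw [inner_neg_left, inner_neg_right, hSsymm]
    ring
  have hconst := (convex_Icc (0 : ℝ) 1).norm_image_sub_le_of_norm_hasDerivWithin_le hg
    (fun _ _ => by rw [norm_zero]) (left_mem_Icc.2 zero_le_one) ht
  have hg0 : g 0 = 0 := by simp [g, hu0, hw0]
  rw [zero_mul, hg0, sub_zero, norm_le_zero_iff] at hconst
  exact sub_eq_zero.1 hconst

end JacobiEquation

section ConjugateInstants

variable {S : ℝ → EuclideanSpace ℝ (Fin n) →L[ℝ] EuclideanSpace ℝ (Fin n)} 
  {u : ℝ → EuclideanSpace ℝ (Fin n)} {t : ℝ}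

theorem isJacobiSolution_of_mem_jacobiSolutions (hu : u ∈ jacobiSolutions S 1 one_pos t) :
    IsJacobiSolution S u :=
  ⟨hu.2.1, hu.2.2.1⟩

theorem jacobiSolutions_le_jacobiSolutions_zero (t : ℝ) :
    jacobiSolutions S 1 one_pos t ≤ jacobiSolutions S 1 one_pos 0 :=
  fun _ hu => ⟨hu.1, hu.2.1, hu.2.2.1, hu.2.2.2.1, hu.2.2.2.1⟩

theorem eq_zero_of_mem_jacobiSolutions (hu : u ∈ jacobiSolutions S 1 one_pos t)
    (h : ∀ x ∈ I, u x = 0) : u = 0 :=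
  funext fun x => (hu.1 x).trans (h _ ⟨le_min (le_max_right x 0) zero_le_one, min_le_right _ _⟩)

def jacobiVelocity (S : ℝ → EuclideanSpace ℝ (Fin n) →L[ℝ] EuclideanSpace ℝ (Fin n)) (t : ℝ)
    (ht : t ∈ I) : jacobiSolutions S 1 one_pos 0 →ₗ[ℝ] EuclideanSpace ℝ (Fin n) where
  toFun u := derivWithin u I t
  map_add' u v := derivWithin_add
    ((isJacobiSolution_of_mem_jacobiSolutions u.2).hasDerivWithinAt ht).differentiableWithinAt
    ((isJacobiSolution_of_mem_jacobiSolutions v.2).hasDerivWithinAt ht).differentiableWithinAt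
  map_smul' c u := derivWithin_const_smul c
    ((isJacobiSolution_of_mem_jacobiSolutions u.2).hasDerivWithinAt ht).differentiableWithinAt

theorem jacobiVelocity_zero_injective {M : ℝ} (hM : ∀ x ∈ I, ‖S x‖ ≤ M) :
    Function.Injective (jacobiVelocity S 0 (left_mem_Icc.2 zero_le_one)) := by
  refine (injective_iff_map_eq_zero _).2 fun u hu => Subtype.ext ?_
  have h₀ : phase u.1 0 = 0 := Prod.ext u.2.2.2.2.1 hu
  exact eq_zero_of_mem_jacobiSolutions u.2 fun x hx => congrArg Prod.fst
    ((isJacobiSolution_of_mem_jacobiSolutions u.2).phase_eq_zero hM (left_mem_Icc.2 zero_le_one)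
      h₀ hx)

theorem eventually_conjMult_eq_zero {M t₀ : ℝ} (hM : ∀ x ∈ I, ‖S x‖ ≤ M)
    (hsym : ∀ x ∈ I, (S x : EuclideanSpace ℝ (Fin n) →ₗ[ℝ] EuclideanSpace ℝ (Fin n)).IsSymmetric)
    (ht₀ : t₀ ∈ I) :
    ∀ᶠ t in 𝓝[≠] t₀, t ∈ I → conjMult S t = 0 := by
  -- Parametrising the solutions vanishing at `0` by their initial velocity gives them the norm
  -- in which the Taylor estimate is uniform.
  set D₀ := jacobiVelocity S 0 (left_mem_Icc.2 zero_le_one)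
  set e := LinearEquiv.ofInjective D₀ (jacobiVelocity_zero_injective hM)
  have hsol : ∀ v, IsJacobiSolution S (e.symm v) :=
    fun v => isJacobiSolution_of_mem_jacobiSolutions (e.symm v).2
  have hsol₀ : ∀ v, (e.symm v).1 0 = 0 := fun v => (e.symm v).2.2.2.2.1
  have hD₀ : ∀ v, D₀ (e.symm v) = v := fun v => congrArg Subtype.val (e.apply_symm_apply v)
  let f : ℝ → LinearMap.range D₀ →ₗ[ℝ] EuclideanSpace ℝ (Fin n) := fun t =>
    LinearMap.proj t ∘ₗ (jacobiSolutions S 1 one_pos 0).subtype ∘ₗ e.symm.toLinearMap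
  let B := jacobiVelocity S t₀ ht₀ ∘ₗ e.symm.toLinearMap
  have horth : ∀ v z, f t₀ z = 0 → ⟪f t₀ v, B z⟫ = 0 := fun v z hz => by
    change ⟪(e.symm v).1 t₀, derivWithin (e.symm z) I t₀⟫ = 0
    rw [(hsol v).inner_derivWithin_comm (hsol z) hsym (hsol₀ v) (hsol₀ z) ht₀,
      show (e.symm z).1 t₀ = 0 from hz, inner_zero_right]
  have hker : ∀ v, f t₀ v = 0 → B v = 0 → v = 0 := fun v hv hBv => by
    have h₀ := (hsol v).phase_eq_zero hM ht₀ (Prod.ext hv hBv) (left_mem_Icc.2 zero_le_one)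
    exact Subtype.ext ((hD₀ v).symm.trans (congrArg Prod.snd h₀))
  have htaylor : ∀ t ∈ I, ∀ v, ‖f t v - f t₀ v - (t - t₀) • B v‖ ≤
      M * Real.exp (max 1 M) * (t - t₀) ^ 2 * ‖v‖ := fun t ht v => by
    rw [← Submodule.norm_coe, ← hD₀ v]
    exact (hsol v).norm_sub_sub_smul_le hM (hsol₀ v) ht₀ ht
  filter_upwards [eventually_injective_of_taylor f B horth hker htaylor] with t hinj ht
  suffices hbot : jacobiSolutions S 1 one_pos t = ⊥ by rw [conjMult, hbot, rank_bot, map_zero]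
  refine (Submodule.eq_bot_iff _).2 fun u hu => ?_
  have hu₀ := jacobiSolutions_le_jacobiSolutions_zero t hu
  have : e ⟨u, hu₀⟩ = 0 := hinj ht <| by
    change (e.symm (e ⟨u, hu₀⟩)).1 t = (e.symm 0).1 t
    rw [e.symm_apply_apply, map_zero]
    exact hu.2.2.2.2
  exact congrArg Subtype.val ((LinearEquiv.map_eq_zero_iff e).1 this)

end ConjugateInstants

theorem conjugate_instants_finite_general {n : ℕ}
    (S : ℝ → (EuclideanSpace ℝ (Fin n) →L[ℝ] EuclideanSpace ℝ (Fin n)))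
    (hS : ContDiffOn ℝ (⊤ : ℕ∞) S (Icc 0 1))
    (hsym : ∀ x ∈ Icc (0:ℝ) 1, IsSelfAdjoint (S x)) :
    {t : ℝ | t ∈ Ioc (0:ℝ) 1 ∧ 0 < conjMult S t}.Finite := by
  obtain ⟨M, hM⟩ := isCompact_Icc.exists_bound_of_continuousOn hS.continuousOn
  have hsymm x (hx : x ∈ I) := ContinuousLinearMap.isSelfAdjoint_iff_isSymmetric.1 (hsym x hx)
  have hcodiscrete : {t | conjMult S t = 0} ∈ codiscreteWithin I :=
    mem_codiscreteWithin_iff_forall_mem_nhdsNE.2 fun t₀ ht₀ =>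
      (eventually_conjMult_eq_zero hM hsymm ht₀).mono fun t ht => (em (t ∈ I)).imp ht id
  refine (isCompact_Icc.finite_sdiff_of_mem_codiscreteWithin hcodiscrete).subset ?_
  rintro t ⟨ht, hpos⟩
  exact ⟨Ioc_subset_Icc_self ht, hpos.ne'⟩

/-- If the geodesic is non-degenerate, i.e. `m 1 = 0`, then the set of conjugate instants
`{t ∈ (0,1] : m t > 0}` is finite. -/
theorem conjugate_instants_finite {n : ℕ}
    (S : ℝ → (EuclideanSpace ℝ (Fin n) →L[ℝ] EuclideanSpace ℝ (Fin n)))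
    (hS : ContDiffOn ℝ (⊤ : ℕ∞) S (Icc 0 1))
    (hsym : ∀ x ∈ Icc (0:ℝ) 1, IsSelfAdjoint (S x))
    (hnd : conjMult S 1 = 0) :
    {t : ℝ | t ∈ Ioc (0:ℝ) 1 ∧ 0 < conjMult S t}.Finite :=
  conjugate_instants_finite_general S hS hsym
end
end

section
/- Let H be a real Hilbert space and let L : [0,1] → L(H) be a norm-continuous path of operators such that for every t ∈ [0,1], L_t = I_H + K_t is invertible, where K_t is compact and selfadjoint. Then μ(L_0) = μ(L_1), where μ denotes the Morse index. -/
/-!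
Near an invertible `L = 1 + K` with `K` compact and selfadjoint, the space splits as `N + P` with
`⟪L u, u⟫ ≤ -c ‖u‖²` on `N` and `⟪L u, u⟫ ≥ c ‖u‖²` on `P`. Take for `N` the span of the
eigenvectors of `K` with eigenvalue `< -1`, and for `P` the span of those with eigenvalue `≥ 1`
plus the orthogonal complement `W` of all eigenvectors with eigenvalue of modulus `≥ 1`. The latter
span is finite dimensional because `K` is compact and expands it; `K` has norm `< 1` on `W` because
a compact selfadjoint operator has an eigenvalue whose modulus is its norm; and the eigenvalue `-1`
is excluded because `L` is invertible.

Such a splitting survives, with constant `c - ‖T - L‖`, for every `T` with `‖T - L‖ < c`, and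
it forces `μ(T) = dim N`: `N` is negative for `T`, while a negative subspace of `T` meets `P`
trivially, so it injects into `H / P`, a quotient of `N`. Hence `μ` is locally constant along the
path, and constant on the connected interval `[0, 1]`.
-/

open Set RealInnerProductSpace

noncomputable section

variable {H : Type*} [NormedAddCommGroup H] [InnerProductSpace ℝ H] [CompleteSpace H]

/-- The Morse index `μ(T)` of a bounded operator `T` on a real Hilbert space: the supremum of
the dimensions of subspaces on which the quadratic form `u ↦ ⟪T u, u⟫` is negative definite. -/
def morseIndex (T : H →L[ℝ] H) : ℕ∞ :=
  ⨆ U ∈ {U : Submodule ℝ H | ∀ u ∈ U, u ≠ 0 → ⟪T u, u⟫ < 0},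
    (Module.rank ℝ ↥U).toENat

open Module.End Topology

section QuadraticForm

variable {E : Type*} [NormedAddCommGroup E] [InnerProductSpace ℝ E]

theorem rank_toENat_le_morseIndex {L : E →L[ℝ] E} {U : Submodule ℝ E}
    (hU : ∀ u ∈ U, u ≠ 0 → ⟪L u, u⟫ < 0) : (Module.rank ℝ U).toENat ≤ morseIndex L :=
  le_iSup₂ (f := fun (U : Submodule ℝ E) _ => (Module.rank ℝ U).toENat) U hU

theorem Submodule.rank_le_of_disjoint_of_sup_eq_top {K V : Type*} [DivisionRing K]
    [AddCommGroup V] [Module K V] {U N P : Submodule K V} (hUP : Disjoint U P)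
    (hNP : N ⊔ P = ⊤) : Module.rank K U ≤ Module.rank K N := by
  have hinj : Function.Injective (P.mkQ ∘ₗ U.subtype) := by
    rw [← LinearMap.ker_eq_bot, LinearMap.ker_comp, Submodule.ker_mkQ,
      ← Submodule.disjoint_iff_comap_eq_bot]
    exact hUP
  have hsurj : Function.Surjective (P.mkQ ∘ₗ N.subtype) := by
    rw [← LinearMap.range_eq_top, LinearMap.range_comp, Submodule.range_subtype,
      Submodule.map_mkQ_eq_top, sup_comm, hNP]
  exact (LinearMap.rank_le_of_injective _ hinj).trans (LinearMap.rank_le_of_surjective _ hsurj)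

theorem morseIndex_eq_rank_of_sup_eq_top {L : E →L[ℝ] E} {N P : Submodule ℝ E}
    (hNP : N ⊔ P = ⊤) (hN : ∀ u ∈ N, u ≠ 0 → ⟪L u, u⟫ < 0) (hP : ∀ u ∈ P, 0 ≤ ⟪L u, u⟫) :
    morseIndex L = (Module.rank ℝ N).toENat := by
  refine le_antisymm (iSup₂_le fun U hU => ?_) (rank_toENat_le_morseIndex hN)
  have hUP : Disjoint U P := Submodule.disjoint_def.2 fun u huU huP => by
    by_contra hu
    exact (hU u huU hu).not_ge (hP u huP)
  exact Cardinal.toENat.monotone' (Submodule.rank_le_of_disjoint_of_sup_eq_top hUP hNP)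

theorem abs_inner_sub_inner_le (T L : E →L[ℝ] E) (u : E) :
    |⟪T u, u⟫ - ⟪L u, u⟫| ≤ ‖T - L‖ * ‖u‖ ^ 2 := by
  rw [← inner_sub_left, ← sub_apply, sq, ← mul_assoc]
  exact (abs_real_inner_le_norm _ _).trans (by gcongr; exact (T - L).le_opNorm u)

theorem exists_pos_inner_le_neg_of_finiteDimensional {L : E →L[ℝ] E} {U : Submodule ℝ E}
    [FiniteDimensional ℝ U] (hU : ∀ u ∈ U, u ≠ 0 → ⟪L u, u⟫ < 0) :
    ∃ c > 0, ∀ u ∈ U, ⟪L u, u⟫ ≤ -(c * ‖u‖ ^ 2) := by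
  rcases subsingleton_or_nontrivial U with _ | _
  · refine ⟨1, one_pos, fun u hu => ?_⟩
    obtain rfl : u = 0 := congrArg Subtype.val (Subsingleton.elim (⟨u, hu⟩ : U) 0)
    simp
  let q : U → ℝ := fun u => ⟪L u, u⟫
  have hq : ∀ (t : ℝ) (u : U), q (t • u) = t ^ 2 * q u := fun t u => by
    simp only [q, Submodule.coe_smul, map_smul, real_inner_smul_left, real_inner_smul_right]
    ring
  obtain ⟨u₀, hu₀, hmax⟩ := (isCompact_sphere (0 : U) 1).exists_isMaxOn
    (NormedSpace.sphere_nonempty.2 zero_le_one) (by fun_prop : Continuous q).continuousOn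
  have hu₀0 : (u₀ : E) ≠ 0 := by
    rw [← norm_ne_zero_iff, ← Submodule.coe_norm, mem_sphere_zero_iff_norm.1 hu₀]
    exact one_ne_zero
  refine ⟨-q u₀, neg_pos.2 (hU _ u₀.2 hu₀0), fun u hu => ?_⟩
  rcases eq_or_ne u 0 with rfl | hu0
  · simp
  have hunit : ‖u‖⁻¹ • (⟨u, hu⟩ : U) ∈ Metric.sphere (0 : U) 1 := by
    rw [mem_sphere_zero_iff_norm, norm_smul, norm_inv, norm_norm, Submodule.coe_norm,
      inv_mul_cancel₀ (norm_ne_zero_iff.2 hu0)]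
  have hle : ‖u‖⁻¹ ^ 2 * q ⟨u, hu⟩ ≤ q u₀ := hq _ _ ▸ hmax hunit
  calc ⟪L u, u⟫ = ‖u‖ ^ 2 * (‖u‖⁻¹ ^ 2 * q ⟨u, hu⟩) := by field_simp; rfl
    _ ≤ ‖u‖ ^ 2 * q u₀ := by gcongr
    _ = -(-q u₀ * ‖u‖ ^ 2) := by ring

theorem le_inner_of_mem_sup_orthogonal {L : E →L[ℝ] E} (hL : (L : E →ₗ[ℝ] E).IsSymmetric)
    {V A : Submodule ℝ E} (hAV : A ≤ V) (hLV : ∀ x ∈ V, L x ∈ V) {c : ℝ}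
    (hA : ∀ x ∈ A, c * ‖x‖ ^ 2 ≤ ⟪L x, x⟫) (hV : ∀ x ∈ Vᗮ, c * ‖x‖ ^ 2 ≤ ⟪L x, x⟫) :
    ∀ x ∈ A ⊔ Vᗮ, c * ‖x‖ ^ 2 ≤ ⟪L x, x⟫ := by
  intro x hx
  obtain ⟨a, ha, w, hw, rfl⟩ := Submodule.mem_sup.1 hx
  have haw : ⟪a, w⟫ = 0 := Submodule.inner_right_of_mem_orthogonal (hAV ha) hw
  have hLaw : ⟪L a, w⟫ = 0 := Submodule.inner_right_of_mem_orthogonal (hLV a (hAV ha)) hw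
  have hLwa : ⟪L w, a⟫ = 0 := (hL w a).trans (by rw [real_inner_comm]; exact hLaw)
  rw [norm_add_sq_real, haw, map_add, inner_add_left, inner_add_right,
    inner_add_right, hLaw, hLwa]
  linarith [hA a ha, hV w hw]

structure IsDefiniteSplitting (L : E →L[ℝ] E) (N P : Submodule ℝ E) (c : ℝ) : Prop where
  pos : 0 < c
  sup_eq_top : N ⊔ P = ⊤
  inner_le_neg : ∀ u ∈ N, ⟪L u, u⟫ ≤ -(c * ‖u‖ ^ 2)
  le_inner : ∀ u ∈ P, c * ‖u‖ ^ 2 ≤ ⟪L u, u⟫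

namespace IsDefiniteSplitting

variable {L T : E →L[ℝ] E} {N P : Submodule ℝ E} {c : ℝ}

theorem morseIndex_eq (h : IsDefiniteSplitting L N P c) :
    morseIndex L = (Module.rank ℝ N).toENat :=
  morseIndex_eq_rank_of_sup_eq_top h.sup_eq_top
    (fun u hu hu0 => (h.inner_le_neg u hu).trans_lt
      (neg_neg_of_pos (mul_pos h.pos (pow_pos (norm_pos_iff.2 hu0) 2))))
    fun u hu => (mul_nonneg h.pos.le (sq_nonneg _)).trans (h.le_inner u hu)

theorem of_norm_sub_lt (h : IsDefiniteSplitting L N P c) (hT : ‖T - L‖ < c) :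
    IsDefiniteSplitting T N P (c - ‖T - L‖) where
  pos := sub_pos.2 hT
  sup_eq_top := h.sup_eq_top
  inner_le_neg u hu := by
    have := abs_le.1 (abs_inner_sub_inner_le T L u)
    linarith [h.inner_le_neg u hu]
  le_inner u hu := by
    have := abs_le.1 (abs_inner_sub_inner_le T L u)
    linarith [h.le_inner u hu]

theorem eventually_morseIndex_eq (h : IsDefiniteSplitting L N P c) :
    ∀ᶠ T in 𝓝 L, morseIndex T = morseIndex L := by
  filter_upwards [Metric.ball_mem_nhds L h.pos] with T hT
  rw [(h.of_norm_sub_lt (by rwa [← dist_eq_norm])).morseIndex_eq, h.morseIndex_eq]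

end IsDefiniteSplitting

end QuadraticForm

section Eigenspaces

variable {E : Type*} [NormedAddCommGroup E] [InnerProductSpace ℝ E] {K : E →ₗ[ℝ] E}

def eigenspaceSup (K : E →ₗ[ℝ] E) (S : Set ℝ) : Submodule ℝ E :=
  ⨆ a : S, eigenspace K a

theorem eigenspaceSup_mono {S T : Set ℝ} (hST : S ⊆ T) : eigenspaceSup K S ≤ eigenspaceSup K T :=
  iSup_le fun a => le_iSup (fun b : T => eigenspace K b) ⟨a, hST a.2⟩

theorem eigenspace_le_eigenspaceSup {S : Set ℝ} {a : ℝ} (ha : a ∈ S) :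
    eigenspace K a ≤ eigenspaceSup K S :=
  le_iSup (fun b : S => eigenspace K b) ⟨a, ha⟩

theorem apply_mem_eigenspaceSup {S : Set ℝ} {x : E} (hx : x ∈ eigenspaceSup K S) :
    K x ∈ eigenspaceSup K S := by
  refine Submodule.iSup_induction (motive := fun y => K y ∈ eigenspaceSup K S) _ hx
    (fun a y hy => ?_) (by simp) fun y z hy hz => by simpa using add_mem hy hz
  rw [mem_eigenspace_iff.1 hy]
  exact eigenspace_le_eigenspaceSup a.2 (Submodule.smul_mem _ _ hy)

namespace LinearMap.IsSymmetric

variable (hK : K.IsSymmetric) {S : Set ℝ} {x : E}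
include hK

theorem exists_sum_of_mem_eigenspaceSup (hx : x ∈ eigenspaceSup K S) :
    ∃ (s : Finset S) (v : ∀ a : S, eigenspace K a),
      ‖x‖ ^ 2 = ∑ a ∈ s, ‖v a‖ ^ 2 ∧ ⟪K x, x⟫ = ∑ a ∈ s, a * ‖v a‖ ^ 2 ∧
        ‖K x‖ ^ 2 = ∑ a ∈ s, (a : ℝ) ^ 2 * ‖v a‖ ^ 2 := by
  obtain ⟨f, hf, rfl⟩ := (Submodule.mem_iSup_iff_exists_finsupp _ x).1 hx
  have hO := hK.orthogonalFamily_eigenspaces.comp (Subtype.coe_injective (p := (· ∈ S)))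
  let v : ∀ a : S, eigenspace K a := fun a => ⟨f a, hf a⟩
  let Kv : ∀ a : S, eigenspace K a := fun a => (a : ℝ) • v a
  have hx : f.sum (fun _ xi => xi) = ∑ a ∈ f.support, (eigenspace K a).subtypeₗᵢ (v a) := rfl
  have hKx : K (f.sum fun _ xi => xi) = ∑ a ∈ f.support, (eigenspace K a).subtypeₗᵢ (Kv a) := by
    rw [hx, map_sum]
    exact Finset.sum_congr rfl fun a _ => mem_eigenspace_iff.1 (v a).2
  refine ⟨f.support, v, hx ▸ hO.norm_sum v _, ?_, hKx ▸ ?_⟩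
  · rw [hKx, hx, hO.inner_sum]
    simp [Kv, real_inner_smul_left]
  · rw [hO.norm_sum]
    simp [Kv, norm_smul, mul_pow]

theorem inner_lt_of_mem_eigenspaceSup {b : ℝ} (hS : ∀ a ∈ S, a < b)
    (hx : x ∈ eigenspaceSup K S) (hx0 : x ≠ 0) : ⟪K x, x⟫ < b * ‖x‖ ^ 2 := by
  obtain ⟨s, v, hnorm, hinner, -⟩ := hK.exists_sum_of_mem_eigenspaceSup hx
  obtain ⟨a, has, hva⟩ : ∃ a ∈ s, ‖v a‖ ^ 2 ≠ 0 :=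
    Finset.exists_ne_zero_of_sum_ne_zero (hnorm ▸ by positivity)
  rw [hinner, hnorm, Finset.mul_sum, ← sub_pos, ← Finset.sum_sub_distrib]
  refine Finset.sum_pos' (fun a _ => ?_) ⟨a, has, ?_⟩
  · nlinarith [hS a a.2, sq_nonneg ‖v a‖]
  · nlinarith [hS a a.2, (sq_nonneg ‖v a‖).lt_of_ne' hva]

theorem le_inner_of_mem_eigenspaceSup {b : ℝ} (hS : ∀ a ∈ S, b ≤ a)
    (hx : x ∈ eigenspaceSup K S) : b * ‖x‖ ^ 2 ≤ ⟪K x, x⟫ := by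
  obtain ⟨s, v, hnorm, hinner, -⟩ := hK.exists_sum_of_mem_eigenspaceSup hx
  rw [hinner, hnorm, Finset.mul_sum]
  exact Finset.sum_le_sum fun a _ => by nlinarith [hS a a.2, sq_nonneg ‖v a‖]

theorem norm_le_norm_apply_of_mem_eigenspaceSup (hS : ∀ a ∈ S, 1 ≤ |a|)
    (hx : x ∈ eigenspaceSup K S) : ‖x‖ ≤ ‖K x‖ := by
  obtain ⟨s, v, hnorm, -, hnormK⟩ := hK.exists_sum_of_mem_eigenspaceSup hx
  refine (pow_le_pow_iff_left₀ (norm_nonneg _) (norm_nonneg _) two_ne_zero).1 ?_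
  rw [hnorm, hnormK]
  exact Finset.sum_le_sum fun a _ => le_mul_of_one_le_left (sq_nonneg _)
    ((one_le_sq_iff_one_le_abs _).2 (hS a a.2))

end LinearMap.IsSymmetric

end Eigenspaces

theorem IsCompactOperator.finiteDimensional_of_norm_le_norm_apply {𝕜 E F : Type*}
    [NontriviallyNormedField 𝕜] [CompleteSpace 𝕜] [NormedAddCommGroup E] [NormedSpace 𝕜 E]
    [CompleteSpace E] [NormedAddCommGroup F] [NormedSpace 𝕜 F] {K : E →L[𝕜] F}
    (hK : IsCompactOperator K) {U : Submodule 𝕜 E} (hU : ∀ x ∈ U, ‖x‖ ≤ ‖K x‖) :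
    FiniteDimensional 𝕜 U := by
  set V := U.topologicalClosure
  have hV : ∀ x ∈ V, ‖x‖ ≤ ‖K x‖ := fun x hx =>
    closure_minimal hU (isClosed_le continuous_norm (continuous_norm.comp K.continuous))
      (U.topologicalClosure_coe ▸ hx)
  have : CompleteSpace V := U.isClosed_topologicalClosure.completeSpace_coe
  have hanti : AntilipschitzWith 1 (K ∘L V.subtypeL) := .of_le_mul_dist fun x y => by
    simpa [dist_eq_norm, ← map_sub] using hV _ (sub_mem x.2 y.2)
  obtain ⟨C, hC, hBC⟩ := (hK.comp_clm V.subtypeL).image_closedBall_subset_compact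
    (f := (K ∘L V.subtypeL : V →ₗ[𝕜] F)) 1
  have hball : IsCompact (Metric.closedBall (0 : V) 1) :=
    ((hanti.isClosedEmbedding (K ∘L V.subtypeL).uniformContinuous).isCompact_preimage
      hC).of_isClosed_subset Metric.isClosed_closedBall fun x hx => hBC ⟨x, hx, rfl⟩
  have := FiniteDimensional.of_isCompact_closedBall₀ 𝕜 one_pos hball
  exact Submodule.finiteDimensional_of_le U.le_topologicalClosure

theorem IsCompactOperator.exists_hasEigenvalue_norm_eq {𝕜 E : Type*} [RCLike 𝕜]
    [NormedAddCommGroup E] [InnerProductSpace 𝕜 E] [CompleteSpace E] {T : E →L[𝕜] E}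
    (hT : IsCompactOperator T) (hsa : IsSelfAdjoint T) (hT0 : T ≠ 0) :
    ∃ μ, HasEigenvalue (T : E →ₗ[𝕜] E) μ ∧ ‖μ‖ = ‖T‖ := by
  have hrad := T.spectralRadius_eq_nnnorm hsa
  have hne : (spectrum 𝕜 T).Nonempty := by
    by_contra h
    rw [Set.not_nonempty_iff_eq_empty] at h
    simp [spectralRadius, h, eq_comm (a := (0 : ENNReal)), hT0] at hrad
  obtain ⟨μ, hμ, hμT⟩ := spectrum.exists_nnnorm_eq_spectralRadius_of_nonempty hne
  have hμT : ‖μ‖ = ‖T‖ := by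
    simpa [hrad, ← coe_nnnorm] using hμT
  have hμ0 : μ ≠ 0 := by
    rintro rfl
    exact hT0 (norm_eq_zero.1 (by simpa using hμT.symm))
  exact ⟨μ, (hT.hasEigenvalue_iff_mem_spectrum hμ0).2 hμ, hμT⟩

section OneAddCompact

variable {G : Type*} [NormedAddCommGroup G] [InnerProductSpace ℝ G] {K : G →L[ℝ] G}

theorem eigenspaceSup_le_sup_of_injective (hinj : Function.Injective ⇑(1 + K)) :
    eigenspaceSup (K : G →ₗ[ℝ] G) {a | 1 ≤ |a|} ≤
      eigenspaceSup (K : G →ₗ[ℝ] G) (Iio (-1)) ⊔ eigenspaceSup (K : G →ₗ[ℝ] G) (Ici 1) := by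
  refine iSup_le fun ⟨a, ha⟩ => ?_
  rcases lt_trichotomy a (-1) with ha' | rfl | ha'
  · exact le_sup_of_le_left (eigenspace_le_eigenspaceSup ha')
  · intro x hx
    have hKx : K x = -x := by simpa using mem_eigenspace_iff.1 hx
    have hx0 : (1 + K) x = (1 + K) 0 := by simp [hKx]
    simp [hinj hx0]
  · exact le_sup_of_le_right
      (eigenspace_le_eigenspaceSup ((le_abs'.1 ha).resolve_left ha'.not_ge))

variable [CompleteSpace G]

theorem IsCompactOperator.finiteDimensional_eigenspaceSup (hK : IsCompactOperator K)
    (hsa : IsSelfAdjoint K) {S : Set ℝ} (hS : ∀ a ∈ S, 1 ≤ |a|) :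
    FiniteDimensional ℝ (eigenspaceSup (K : G →ₗ[ℝ] G) S) :=
  hK.finiteDimensional_of_norm_le_norm_apply fun _ hx =>
    hsa.isSymmetric.norm_le_norm_apply_of_mem_eigenspaceSup hS hx

theorem IsCompactOperator.exists_norm_apply_le_of_mem_orthogonal (hK : IsCompactOperator K)
    (hsa : IsSelfAdjoint K) :
    ∃ r, 0 ≤ r ∧ r < 1 ∧ ∀ w ∈ (eigenspaceSup (K : G →ₗ[ℝ] G) {a | 1 ≤ |a|})ᗮ,
      ‖K w‖ ≤ r * ‖w‖ := by
  set V := eigenspaceSup (K : G →ₗ[ℝ] G) {a | 1 ≤ |a|}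
  have hKV : ∀ w ∈ Vᗮ, K w ∈ Vᗮ := fun w hw => (Submodule.mem_orthogonal _ _).2 fun v hv => by
    refine (hsa.isSymmetric v w).symm.trans ?_
    exact Submodule.inner_right_of_mem_orthogonal (apply_mem_eigenspaceSup hv) hw
  have : CompleteSpace Vᗮ := (Submodule.isClosed_orthogonal V).completeSpace_coe
  set KV := K.restrict hKV
  refine ⟨‖KV‖, norm_nonneg KV, ?_, fun w hw => KV.le_opNorm ⟨w, hw⟩⟩
  by_contra! hKV1
  have hKV0 : KV ≠ 0 := by
    rintro h
    rw [h, ContinuousLinearMap.opNorm_zero] at hKV1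
    norm_num at hKV1
  have hKVsa : IsSelfAdjoint KV := by
    rw [ContinuousLinearMap.isSelfAdjoint_iff_isSymmetric]
    exact hsa.isSymmetric.restrict_invariant hKV
  obtain ⟨μ, hμ, hμKV⟩ := (hK.restrict' hKV).exists_hasEigenvalue_norm_eq hKVsa hKV0
  obtain ⟨w, hw, hw0⟩ := hμ.exists_hasEigenvector
  have hwV : (w : G) ∈ V := by
    have hμ1 : 1 ≤ |μ| := by rw [← Real.norm_eq_abs, hμKV]; exact hKV1
    refine eigenspace_le_eigenspaceSup (K := (K : G →ₗ[ℝ] G)) (S := {a | 1 ≤ |a|}) hμ1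
      (mem_eigenspace_iff.2 ?_)
    exact congrArg Subtype.val (mem_eigenspace_iff.1 hw)
  exact hw0 (Subtype.ext ((Submodule.mem_bot ℝ).1
    (Submodule.inf_orthogonal_eq_bot V ▸ Submodule.mem_inf.2 ⟨hwV, w.2⟩)))

theorem IsCompactOperator.exists_isDefiniteSplitting_one_add (hK : IsCompactOperator K)
    (hsa : IsSelfAdjoint K) (hinj : Function.Injective ⇑(1 + K)) :
    ∃ N P c, IsDefiniteSplitting (1 + K) N P c := by
  set V := eigenspaceSup (K : G →ₗ[ℝ] G) {a | 1 ≤ |a|}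
  set N := eigenspaceSup (K : G →ₗ[ℝ] G) (Iio (-1))
  set Q := eigenspaceSup (K : G →ₗ[ℝ] G) (Ici 1)
  have hinner : ∀ x, ⟪(1 + K) x, x⟫ = ‖x‖ ^ 2 + ⟪K x, x⟫ := fun x => by
    rw [add_apply, inner_add_left, one_apply_eq_self, real_inner_self_eq_norm_sq]
  have : FiniteDimensional ℝ V := hK.finiteDimensional_eigenspaceSup hsa fun _ ha => ha
  have hNV : N ≤ V := eigenspaceSup_mono fun a (ha : a < -1) => le_abs'.2 (Or.inl ha.le)
  have : FiniteDimensional ℝ N := Submodule.finiteDimensional_of_le hNV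
  have hNneg : ∀ u ∈ N, u ≠ 0 → ⟪(1 + K) u, u⟫ < 0 := fun u hu hu0 => by
    have : ⟪K u, u⟫ < -1 * ‖u‖ ^ 2 :=
      hsa.isSymmetric.inner_lt_of_mem_eigenspaceSup (fun _ ha => ha) hu hu0
    rw [hinner]
    linarith
  obtain ⟨c, hc, hN⟩ := exists_pos_inner_le_neg_of_finiteDimensional hNneg
  obtain ⟨r, hr0, hr1, hr⟩ := hK.exists_norm_apply_le_of_mem_orthogonal hsa
  have hP : ∀ x ∈ Q ⊔ Vᗮ, (1 - r) * ‖x‖ ^ 2 ≤ ⟪(1 + K) x, x⟫ := by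
    refine le_inner_of_mem_sup_orthogonal ((IsSelfAdjoint.one _).add hsa).isSymmetric
      (eigenspaceSup_mono fun a (ha : 1 ≤ a) => le_abs'.2 (Or.inr ha))
      (fun x hx => add_mem hx (apply_mem_eigenspaceSup hx)) (fun x hx => ?_) fun w hw => ?_
    · have : 1 * ‖x‖ ^ 2 ≤ ⟪K x, x⟫ :=
        hsa.isSymmetric.le_inner_of_mem_eigenspaceSup (S := Ici 1) (fun _ ha => ha) hx
      rw [hinner]
      nlinarith [sq_nonneg ‖x‖]
    · have := abs_le.1 ((abs_real_inner_le_norm (K w) w).trans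
        (mul_le_mul_of_nonneg_right (hr w hw) (norm_nonneg w)))
      rw [hinner]
      nlinarith
  refine ⟨N, Q ⊔ Vᗮ, min c (1 - r), ⟨lt_min hc (by linarith), ?_, fun u hu => ?_, fun u hu => ?_⟩⟩
  · refine top_unique ?_
    rw [← Submodule.sup_orthogonal_of_hasOrthogonalProjection (K := V), ← sup_assoc]
    exact sup_le_sup_right (eigenspaceSup_le_sup_of_injective hinj) _
  · nlinarith [hN u hu, min_le_left c (1 - r), sq_nonneg ‖u‖]
  · nlinarith [hP u hu, min_le_right c (1 - r), sq_nonneg ‖u‖]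

end OneAddCompact

/-- Homotopy invariance of the Morse index: if `t ↦ I + K t` is a norm-continuous path of
invertible operators on `[0,1]` with each `K t` compact and selfadjoint, then the Morse
indices of the endpoints agree. -/
theorem morseIndex_homotopy_invariant
    (K : ℝ → (H →L[ℝ] H)) (hcont : ContinuousOn K (Icc 0 1))
    (hcpt : ∀ t ∈ Icc (0:ℝ) 1, IsCompactOperator ⇑(K t))
    (hsa : ∀ t ∈ Icc (0:ℝ) 1, IsSelfAdjoint (K t))
    (hinv : ∀ t ∈ Icc (0:ℝ) 1, IsUnit (1 + K t)) :
    morseIndex (1 + K 0) = morseIndex (1 + K 1) := by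
  have hlocal : IsLocallyConstant fun t : Icc (0 : ℝ) 1 => morseIndex (1 + K t) := by
    refine (IsLocallyConstant.iff_eventually_eq _).2 fun ⟨t, ht⟩ => ?_
    obtain ⟨N, P, c, hsplit⟩ := (hcpt t ht).exists_isDefiniteSplitting_one_add (hsa t ht)
      ((ContinuousLinearMap.isUnit_iff_bijective.1 (hinv t ht)).1)
    have hpath : Continuous fun s : Icc (0 : ℝ) 1 => 1 + K s :=
      continuous_const.add hcont.domRestrict
    exact (hpath.continuousAt (x := ⟨t, ht⟩)).eventually hsplit.eventually_morseIndex_eq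
  exact hlocal.apply_eq_of_isPreconnected isPreconnected_univ (x := ⟨0, by norm_num⟩)
    (y := ⟨1, by norm_num⟩) trivial trivial
end
end

section
/- Let H be a real Hilbert space, K : [0,1] → L(H) a C² path of compact selfadjoint operators, and L_λ = I_H + K_λ. Suppose λ₀ ∈ (0,1) is a regular crossing, i.e. ker L_{λ₀} ≠ {0} and the quadratic form u ↦ ⟨K̇_{λ₀} u, u⟩ restricted to ker L_{λ₀} is non-degenerate. Then there exist ε > 0 and c > 0 such that ‖L_λ u‖ ≥ c |λ − λ₀| ‖u‖ for all λ with |λ − λ₀| < ε and all u ∈ H. -/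
/-!
Write `t = λ - λ₀`, `T = L_{λ₀}`, `D = K̇_{λ₀}`, so that `L_λ = T + t D + o(t)`, and split
`u = x + y` along `N = ker T` and `Nᗮ`. As `T` is selfadjoint, its range is orthogonal to `N`,
so the orthogonal projection `P` onto `N` gives `‖L_λ u‖ ≥ |t| (‖P D x‖ - ‖D‖ ‖y‖ - o(1) ‖u‖)`;
regularity says `P D` is injective on the finite-dimensional `N`, hence bounded below there.
On the other hand `‖L_λ u‖ ≥ ‖T y‖ - O(|t|) ‖u‖`, and `T` is bounded below on `Nᗮ` by the
Fredholm alternative. For small `|t|` a suitable combination of the two bounds eliminates `‖y‖`.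
-/

open Set RealInnerProductSpace

section Compact

variable {𝕜 X : Type*} [NontriviallyNormedField 𝕜] [NormedAddCommGroup X] [NormedSpace 𝕜 X]

theorem IsCompactOperator.finiteDimensional_ker_one_add [CompleteSpace 𝕜] {A : X →L[𝕜] X}
    (hA : IsCompactOperator A) :
    FiniteDimensional 𝕜 (LinearMap.ker ((1 + A : X →L[𝕜] X) : X →ₗ[𝕜] X)) := by
  set N := LinearMap.ker ((1 + A : X →L[𝕜] X) : X →ₗ[𝕜] X)
  have hA_eq : ∀ x ∈ N, A x = -x := fun x hx => eq_neg_of_add_eq_zero_right hx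
  have hAN : ∀ x ∈ N, A x ∈ N := fun x hx => hA_eq x hx ▸ N.neg_mem hx
  have hcpt :=
    (hA.restrict (f := (A : X →ₗ[𝕜] X)) hAN (ContinuousLinearMap.isClosed_ker _)).neg
  have hid : (id : N → N) = -⇑((A : X →ₗ[𝕜] X).restrict hAN) :=
    funext fun x => Subtype.ext <| by simp [hA_eq x x.2]
  exact FiniteDimensional.of_isCompactOperator_id (hid ▸ hcpt)

theorem IsCompactOperator.exists_mul_norm_le_norm_one_add_apply {A : X →L[𝕜] X}
    (hA : IsCompactOperator A) {S : Submodule 𝕜 X} (hS : IsClosed (S : Set X))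
    (hAS : ∀ x ∈ S, A x ∈ S)
    (hdisj : Disjoint S (LinearMap.ker ((1 + A : X →L[𝕜] X) : X →ₗ[𝕜] X))) :
    ∃ δ > 0, ∀ x ∈ S, δ * ‖x‖ ≤ ‖(1 + A) x‖ := by
  set A' : S →L[𝕜] S := A.restrict hAS
  have hA' : IsCompactOperator A' := hA.restrict (f := (A : X →ₗ[𝕜] X)) hAS hS
  have hnot : ¬ Module.End.HasEigenvalue (A' : Module.End 𝕜 S) (-1) := by
    rw [Module.End.hasEigenvalue_iff, Ne, not_not, Submodule.eq_bot_iff]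
    intro x hx
    rw [Module.End.mem_eigenspace_iff] at hx
    have hker : (x : X) ∈ LinearMap.ker ((1 + A : X →L[𝕜] X) : X →ₗ[𝕜] X) := by
      have hAx : A x = -x := by simpa [A'] using congrArg Subtype.val hx
      simp [hAx]
    exact Subtype.ext (Submodule.disjoint_def.mp hdisj x x.2 hker)
  obtain ⟨δ, hδ, h⟩ := antilipschitzWith_iff_exists_mul_le_norm.mp
    (hA'.antilipschitz_of_not_hasEigenvalue (neg_ne_zero.mpr one_ne_zero) hnot)
  refine ⟨δ, hδ, fun x hx => ?_⟩
  simpa [A', add_comm] using h ⟨x, hx⟩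

end Compact

theorem le_of_block_bounds {a δ M r X Y U Z : ℝ} (ha : 0 < a) (hδ : 0 < δ) (hM : 0 ≤ M)
    (hr : 0 ≤ r) (hU : 0 ≤ U) (hZ : 0 ≤ Z) (hrε : r * (M + a) ^ 2 ≤ a * δ / 4)
    (hXY : U ≤ X + Y) (hker : r * (a * X - M * Y - a / 4 * U) ≤ Z)
    (hcompl : δ * Y - r * (M + a / 4) * U ≤ Z) :
    a / 4 * r * U ≤ Z := by
  -- `δ • hker + r (M + a) • hcompl` cancels `Y`.
  have h1 : r * (M + a) ≤ δ / 4 := by nlinarith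
  have h2 : r * (M + a) * (M + a / 4) ≤ a * δ / 4 := by
    nlinarith [mul_le_mul_of_nonneg_left (by linarith : M + a / 4 ≤ M + a)
      (by positivity : 0 ≤ r * (M + a))]
  nlinarith [mul_le_mul_of_nonneg_left hcompl (by positivity : 0 ≤ r * (M + a)),
    mul_le_mul_of_nonneg_left hker hδ.le, mul_le_mul_of_nonneg_right h2 (mul_nonneg hr hU),
    mul_le_mul_of_nonneg_right hXY (mul_nonneg hr ha.le), mul_le_mul_of_nonneg_right h1 hZ]

section Hilbert

variable {𝕜 E : Type*} [RCLike 𝕜] [NormedAddCommGroup E] [InnerProductSpace 𝕜 E]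

theorem LinearMap.IsSymmetric.apply_mem_orthogonal_ker {T : E →ₗ[𝕜] E} (hT : T.IsSymmetric)
    (u : E) : T u ∈ (LinearMap.ker T)ᗮ :=
  hT.orthogonal_range ▸ Submodule.le_orthogonal_orthogonal _ (LinearMap.mem_range_self T u)

theorem Submodule.exists_mul_norm_le_norm_starProjection_apply (N : Submodule 𝕜 E)
    [FiniteDimensional 𝕜 N] (D : E →L[𝕜] E)
    (hD : ∀ u ∈ N, (∀ v ∈ N, inner 𝕜 (D u) v = 0) → u = 0) :
    ∃ a > 0, ∀ x ∈ N, a * ‖x‖ ≤ ‖N.starProjection (D x)‖ := by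
  set f : N →L[𝕜] E := N.starProjection ∘L D ∘L N.subtypeL
  have hf : LinearMap.ker (f : N →ₗ[𝕜] E) = ⊥ := by
    refine (Submodule.eq_bot_iff _).mpr fun x hx => Subtype.ext (hD x x.2 fun v hv => ?_)
    have : D x ∈ Nᗮ := N.starProjection_apply_eq_zero_iff.mp hx
    exact N.inner_left_of_mem_orthogonal hv this
  obtain ⟨K, -, hK⟩ := (f : N →ₗ[𝕜] E).exists_antilipschitzWith hf
  obtain ⟨a, ha, h⟩ := antilipschitzWith_iff_exists_mul_le_norm.mp ⟨K, hK⟩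
  exact ⟨a, ha, fun x hx => h ⟨x, hx⟩⟩

end Hilbert

section Real

variable {F : Type*} [NormedAddCommGroup F] [InnerProductSpace ℝ F]

theorem mul_abs_mul_norm_le_norm_add_smul_add_apply {T : F →L[ℝ] F}
    (hT : (T : F →ₗ[ℝ] F).IsSymmetric)
    [(LinearMap.ker (T : F →ₗ[ℝ] F)).HasOrthogonalProjection]
    (D E : F →L[ℝ] F) {a δ t : ℝ} (ha : 0 < a) (hδ : 0 < δ)
    (hT_coercive : ∀ y ∈ (LinearMap.ker (T : F →ₗ[ℝ] F))ᗮ, δ * ‖y‖ ≤ ‖T y‖)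
    (hD : ∀ x ∈ LinearMap.ker (T : F →ₗ[ℝ] F),
      a * ‖x‖ ≤ ‖(LinearMap.ker (T : F →ₗ[ℝ] F)).starProjection (D x)‖)
    (ht : |t| * (‖D‖ + a) ^ 2 ≤ a * δ / 4) (hE : ‖E‖ ≤ a / 4 * |t|) (u : F) :
    a / 4 * |t| * ‖u‖ ≤ ‖(T + t • D + E) u‖ := by
  set N := LinearMap.ker (T : F →ₗ[ℝ] F)
  set P := N.starProjection
  set x := P u
  set y := u - P u
  set L := T + t • D + E
  have hx : x ∈ N := N.starProjection_apply_mem u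
  have hy : y ∈ Nᗮ := N.sub_starProjection_mem_orthogonal u
  have hu : u = x + y := (add_sub_cancel _ _).symm
  have hTx : T x = 0 := hx
  have hEu : ‖E u‖ ≤ a / 4 * |t| * ‖u‖ := (E.le_opNorm u).trans (by gcongr)
  have hker : |t| * (a * ‖x‖ - ‖D‖ * ‖y‖ - a / 4 * ‖u‖) ≤ ‖L u‖ := by
    have hPTu : P (T u) = 0 :=
      N.starProjection_apply_eq_zero_iff.mpr (hT.apply_mem_orthogonal_ker u)
    have hPL : P (L u) = t • P (D x) + (t • P (D y) + P (E u)) := by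
      have hDu : D u = D x + D y := by rw [← map_add, ← hu]
      simp only [L, add_apply, smul_apply, map_add, map_smul, hPTu, hDu, smul_add, zero_add]
      abel
    have hPDy : ‖P (D y)‖ ≤ ‖D‖ * ‖y‖ := (N.norm_starProjection_apply_le _).trans (D.le_opNorm y)
    have hPEu : ‖P (E u)‖ ≤ a / 4 * |t| * ‖u‖ := (N.norm_starProjection_apply_le _).trans hEu
    calc |t| * (a * ‖x‖ - ‖D‖ * ‖y‖ - a / 4 * ‖u‖)
        ≤ |t| * ‖P (D x)‖ - (|t| * (‖D‖ * ‖y‖) + a / 4 * |t| * ‖u‖) := by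
          nlinarith [hD x hx, abs_nonneg t]
      _ ≤ ‖t • P (D x)‖ - ‖t • P (D y) + P (E u)‖ := by
          grw [norm_add_le, norm_smul, norm_smul, Real.norm_eq_abs, hPDy, hPEu]
      _ ≤ ‖P (L u)‖ := hPL ▸ norm_sub_le_norm_add _ _
      _ ≤ ‖L u‖ := N.norm_starProjection_apply_le _
  have hcompl : δ * ‖y‖ - |t| * (‖D‖ + a / 4) * ‖u‖ ≤ ‖L u‖ := by
    have hLu : L u = T y + (t • D + E) u := by
      have hTu : T u = T y := by rw [hu, map_add, hTx, zero_add]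
      simp only [L, add_apply, smul_apply, hTu]
      abel
    have hR : ‖(t • D + E) u‖ ≤ |t| * (‖D‖ + a / 4) * ‖u‖ := by
      refine ((t • D + E).le_opNorm u).trans ?_
      gcongr
      calc ‖t • D + E‖ ≤ ‖t • D‖ + ‖E‖ := norm_add_le _ _
        _ ≤ |t| * (‖D‖ + a / 4) := by rw [norm_smul, Real.norm_eq_abs]; linarith
    calc δ * ‖y‖ - |t| * (‖D‖ + a / 4) * ‖u‖ ≤ ‖T y‖ - ‖(t • D + E) u‖ := by
          linarith [hT_coercive y hy]
      _ ≤ ‖L u‖ := hLu ▸ norm_sub_le_norm_add _ _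
  exact le_of_block_bounds ha hδ (norm_nonneg _) (abs_nonneg t) (norm_nonneg _) (norm_nonneg _)
    ht (hu ▸ norm_add_le x y) hker hcompl

end Real

variable {H : Type*} [NormedAddCommGroup H] [InnerProductSpace ℝ H] [CompleteSpace H]

theorem norm_estimate_at_regular_crossing_general
    (K : ℝ → (H →L[ℝ] H)) (hK : ContDiffOn ℝ 2 K (Icc 0 1))
    (hcpt : ∀ l ∈ Icc (0:ℝ) 1, IsCompactOperator ⇑(K l))
    (hsa : ∀ l ∈ Icc (0:ℝ) 1, IsSelfAdjoint (K l))
    (l₀ : ℝ) (hl₀ : l₀ ∈ Ioo (0:ℝ) 1)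
    (hreg : ∀ u ∈ LinearMap.ker ((1 + K l₀ : H →L[ℝ] H) : H →ₗ[ℝ] H),
      (∀ v ∈ LinearMap.ker ((1 + K l₀ : H →L[ℝ] H) : H →ₗ[ℝ] H), ⟪derivWithin K (Icc 0 1) l₀ u, v⟫ = 0) → u = 0) :
    ∃ ε > (0:ℝ), ∃ c > (0:ℝ), ∀ l : ℝ, |l - l₀| < ε →
      ∀ u : H, c * |l - l₀| * ‖u‖ ≤ ‖(1 + K l) u‖ := by
  have hl₀I : l₀ ∈ Icc (0:ℝ) 1 := Ioo_subset_Icc_self hl₀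
  set T : H →L[ℝ] H := 1 + K l₀
  set N := LinearMap.ker (T : H →ₗ[ℝ] H)
  set D := derivWithin K (Icc 0 1) l₀
  have hT : (T : H →ₗ[ℝ] H).IsSymmetric :=
    ((IsSelfAdjoint.one _).add (hsa l₀ hl₀I)).isSymmetric
  have : FiniteDimensional ℝ N := (hcpt l₀ hl₀I).finiteDimensional_ker_one_add
  obtain ⟨δ, hδ, hT_coercive⟩ := (hcpt l₀ hl₀I).exists_mul_norm_le_norm_one_add_apply
    N.isClosed_orthogonal (fun y hy => by
      simpa [T] using Nᗮ.sub_mem (hT.apply_mem_orthogonal_ker y) hy) N.orthogonal_disjoint.symm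
  obtain ⟨a, ha, hD⟩ := N.exists_mul_norm_le_norm_starProjection_apply D hreg
  have hder : HasDerivAt K D l₀ :=
    (hK.differentiableOn (by norm_num) l₀ hl₀I).hasDerivWithinAt.hasDerivAt
      (Icc_mem_nhds hl₀.1 hl₀.2)
  obtain ⟨ε₀, hε₀, hε₀E⟩ := Metric.eventually_nhds_iff.mp
    ((hasDerivAt_iff_isLittleO.mp hder).def (by positivity : 0 < a / 4))
  refine ⟨min ε₀ (a * δ / (4 * (‖D‖ + a) ^ 2)), by positivity, a / 4, by positivity,
    fun l hl u => ?_⟩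
  have hL : 1 + K l = (1 + K l₀) + (l - l₀) • D + (K l - K l₀ - (l - l₀) • D) := by abel
  rw [hL]
  refine mul_abs_mul_norm_le_norm_add_smul_add_apply hT D _ ha hδ hT_coercive hD ?_ ?_ u
  · have := (lt_div_iff₀ (by positivity)).mp (hl.trans_le (min_le_right _ _))
    linarith
  · simpa [Real.dist_eq] using hε₀E (hl.trans_le (min_le_left _ _))

/-- At a regular crossing `λ₀` of a `C²` path `λ ↦ L_λ = I + K_λ` of compact selfadjoint
perturbations of the identity, there are `ε, c > 0` such that
`‖L_λ u‖ ≥ c |λ − λ₀| ‖u‖` for all `|λ − λ₀| < ε` and all `u ∈ H`. -/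
theorem norm_estimate_at_regular_crossing
    (K : ℝ → (H →L[ℝ] H)) (hK : ContDiffOn ℝ 2 K (Icc 0 1))
    (hcpt : ∀ l ∈ Icc (0:ℝ) 1, IsCompactOperator ⇑(K l))
    (hsa : ∀ l ∈ Icc (0:ℝ) 1, IsSelfAdjoint (K l))
    (l₀ : ℝ) (hl₀ : l₀ ∈ Ioo (0:ℝ) 1)
    (hcross : LinearMap.ker ((1 + K l₀ : H →L[ℝ] H) : H →ₗ[ℝ] H) ≠ ⊥)
    (hreg : ∀ u ∈ LinearMap.ker ((1 + K l₀ : H →L[ℝ] H) : H →ₗ[ℝ] H),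
      (∀ v ∈ LinearMap.ker ((1 + K l₀ : H →L[ℝ] H) : H →ₗ[ℝ] H), ⟪derivWithin K (Icc 0 1) l₀ u, v⟫ = 0) → u = 0) :
    ∃ ε > (0:ℝ), ∃ c > (0:ℝ), ∀ l : ℝ, |l - l₀| < ε →
      ∀ u : H, c * |l - l₀| * ‖u‖ ≤ ‖(1 + K l) u‖ :=
  norm_estimate_at_regular_crossing_general K hK hcpt hsa l₀ hl₀ hreg
end

section
/- Let H be a real Hilbert space, K : [0,1] → L(H) a C² path of compact selfadjoint operators, and L_λ = I_H + K_λ. If λ₀ ∈ (0,1) is a regular crossing, i.e. ker L_{λ₀} ≠ {0} and the quadratic form u ↦ ⟨K̇_{λ₀} u, u⟩ restricted to ker L_{λ₀} is non-degenerate, then λ₀ is an isolated crossing: there exists ε > 0 such that L_λ is invertible for all λ with 0 < |λ − λ₀| < ε. -/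
/-!
If crossings `λₙ → λ₀`, `λₙ ≠ λ₀`, accumulated at `λ₀`, the Fredholm alternative would give unit
vectors `uₙ ∈ ker L_{λₙ}`, and compactness of `K_{λ₀}` a subsequence converging to a unit vector
`w ∈ ker L_{λ₀}`. For `v ∈ ker L_{λ₀}` selfadjointness of `K_{λ₀}` gives
`⟪(K_{λₙ} - K_{λ₀}) uₙ, v⟫ = ⟪-uₙ, v⟫ - ⟪uₙ, -v⟫ = 0`, so dividing by `λₙ - λ₀` and passing to
the limit, `⟪K̇_{λ₀} w, v⟫ = 0` for all such `v`, contradicting regularity.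
-/

open Set RealInnerProductSpace Filter Topology

theorem Filter.Tendsto.clm_apply {α 𝕜 E F : Type*} [NontriviallyNormedField 𝕜]
    [SeminormedAddCommGroup E] [NormedSpace 𝕜 E] [SeminormedAddCommGroup F] [NormedSpace 𝕜 F]
    {l : Filter α} {A : α → E →L[𝕜] F} {A₀ : E →L[𝕜] F} {u : α → E} {w : E}
    (hA : Tendsto A l (𝓝 A₀)) (hu : Tendsto u l (𝓝 w)) :
    Tendsto (fun a ↦ A a (u a)) l (𝓝 (A₀ w)) :=
  isBoundedBilinearMap_apply.continuous.continuousAt.tendsto.comp (hA.prodMk_nhds hu)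

theorem IsCompactOperator.exists_norm_eq_one_apply_eq_zero_of_not_isUnit_one_add
    {𝕜 E : Type*} [RCLike 𝕜] [NormedAddCommGroup E] [NormedSpace 𝕜 E] [CompleteSpace E]
    {T : E →L[𝕜] E} (hT : IsCompactOperator T) (h : ¬IsUnit (1 + T)) :
    ∃ u, ‖u‖ = 1 ∧ (1 + T) u = 0 := by
  rcases hT.hasEigenvalue_or_mem_resolventSet (neg_ne_zero.2 one_ne_zero : (-1 : 𝕜) ≠ 0)
    with hev | hres
  · obtain ⟨v, hv⟩ := hev.exists_hasEigenvector
    have hTv : T v = -v := by simpa using hv.apply_eq_smul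
    exact ⟨(‖v‖⁻¹ : 𝕜) • v, norm_smul_inv_norm hv.2, by simp [hTv]⟩
  · rw [spectrum.mem_resolventSet_iff, ← IsUnit.neg_iff] at hres
    exact absurd (by simpa [add_comm] using hres) h

theorem IsCompactOperator.exists_subseq_tendsto_mem_ker_one_add
    {𝕜 E : Type*} [NontriviallyNormedField 𝕜] [NormedAddCommGroup E] [NormedSpace 𝕜 E]
    {A : ℕ → E →L[𝕜] E} {A₀ : E →L[𝕜] E} (hA₀ : IsCompactOperator A₀)
    (hA : Tendsto A atTop (𝓝 A₀)) {u : ℕ → E} (hu : ∀ n, ‖u n‖ ≤ 1)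
    (hker : Tendsto (fun n ↦ (1 + A n) (u n)) atTop (𝓝 0)) :
    ∃ w, (1 + A₀) w = 0 ∧ ∃ φ : ℕ → ℕ, StrictMono φ ∧ Tendsto (u ∘ φ) atTop (𝓝 w) := by
  obtain ⟨y, -, φ, hφ, hy⟩ := (hA₀.isCompact_closure_image_closedBall 1).tendsto_subseq
    fun n ↦ subset_closure (mem_image_of_mem A₀ (mem_closedBall_zero_iff.2 (hu n)))
  have hdiff : Tendsto (fun n ↦ (A n - A₀) (u n)) atTop (𝓝 0) := by
    refine squeeze_zero_norm (fun n ↦ ?_) (tendsto_iff_norm_sub_tendsto_zero.1 hA)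
    calc ‖(A n - A₀) (u n)‖ ≤ ‖A n - A₀‖ * ‖u n‖ := (A n - A₀).le_opNorm (u n)
      _ ≤ ‖A n - A₀‖ := mul_le_of_le_one_right (norm_nonneg _) (hu n)
  have hw : Tendsto (u ∘ φ) atTop (𝓝 (-y)) := by
    have := ((hker.sub hdiff).comp hφ.tendsto_atTop).sub hy
    rw [sub_zero, zero_sub] at this
    refine this.congr fun n ↦ ?_
    simp only [Function.comp_apply, add_apply, sub_apply, one_apply_eq_self]
    abel
  refine ⟨-y, tendsto_nhds_unique ?_ (hker.comp hφ.tendsto_atTop), φ, hφ, hw⟩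
  exact ((tendsto_const_nhds.add hA).comp hφ.tendsto_atTop).clm_apply hw

theorem inner_sub_apply_eq_zero_of_one_add_apply_eq_zero
    {𝕜 E : Type*} [RCLike 𝕜] [NormedAddCommGroup E] [InnerProductSpace 𝕜 E]
    {A B : E →L[𝕜] E} (hB : (B : E →ₗ[𝕜] E).IsSymmetric) {u v : E}
    (hu : (1 + A) u = 0) (hv : (1 + B) v = 0) : inner 𝕜 ((A - B) u) v = 0 := by
  have hAu : A u = -u := eq_neg_of_add_eq_zero_right (by simpa using hu)
  have hBv : B v = -v := eq_neg_of_add_eq_zero_right (by simpa using hv)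
  rw [sub_apply, inner_sub_left, hAu, ← ContinuousLinearMap.coe_coe B, hB,
    ContinuousLinearMap.coe_coe, hBv, inner_neg_left, inner_neg_right, sub_self]

theorem exists_ne_zero_mem_ker_inner_deriv_eq_zero_of_crossings_tendsto
    {E : Type*} [NormedAddCommGroup E] [InnerProductSpace ℝ E]
    {K : ℝ → E →L[ℝ] E} {D : E →L[ℝ] E} {s : Set ℝ} {l₀ : ℝ} (hD : HasDerivWithinAt K D s l₀)
    (hcpt : IsCompactOperator (K l₀)) (hsym : (K l₀ : E →ₗ[ℝ] E).IsSymmetric)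
    {l : ℕ → ℝ} (hl : Tendsto l atTop (𝓝[s \ {l₀}] l₀)) {u : ℕ → E} (hu : ∀ n, ‖u n‖ = 1)
    (hker : ∀ n, (1 + K (l n)) (u n) = 0) :
    ∃ w ≠ 0, (1 + K l₀) w = 0 ∧ ∀ v, (1 + K l₀) v = 0 → ⟪D w, v⟫ = 0 := by
  have hKl : Tendsto (K ∘ l) atTop (𝓝 (K l₀)) :=
    hD.continuousWithinAt.tendsto.comp (hl.mono_right (nhdsWithin_mono _ sdiff_subset))
  obtain ⟨w, hw, φ, hφ, huw⟩ := hcpt.exists_subseq_tendsto_mem_ker_one_add hKl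
    (fun n ↦ (hu n).le) (by simp [hker])
  have hw1 : ‖w‖ = 1 := tendsto_nhds_unique huw.norm (by simp [hu])
  have hslope : Tendsto (fun n ↦ slope K l₀ (l (φ n))) atTop (𝓝 D) :=
    (hasDerivWithinAt_iff_tendsto_slope.1 hD).comp (hl.comp hφ.tendsto_atTop)
  refine ⟨w, norm_ne_zero_iff.1 (by simp [hw1]), hw, fun v hv ↦ ?_⟩
  refine tendsto_nhds_unique ((hslope.clm_apply huw).inner tendsto_const_nhds)
    (tendsto_const_nhds.congr fun n ↦ ?_)
  rw [slope_def_module, smul_apply, Function.comp_apply, real_inner_smul_left,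
    inner_sub_apply_eq_zero_of_one_add_apply_eq_zero hsym (hker _) hv, mul_zero]

variable {H : Type*} [NormedAddCommGroup H] [InnerProductSpace ℝ H] [CompleteSpace H]

theorem regular_crossing_isolated_general
    (K : ℝ → (H →L[ℝ] H)) (hK : ContDiffOn ℝ 2 K (Icc 0 1))
    (hcpt : ∀ l ∈ Icc (0:ℝ) 1, IsCompactOperator ⇑(K l))
    (hsa : ∀ l ∈ Icc (0:ℝ) 1, IsSelfAdjoint (K l))
    (l₀ : ℝ) (hl₀ : l₀ ∈ Ioo (0:ℝ) 1)
    (hreg : ∀ u ∈ LinearMap.ker ((1 + K l₀ : H →L[ℝ] H) : H →ₗ[ℝ] H),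
      (∀ v ∈ LinearMap.ker ((1 + K l₀ : H →L[ℝ] H) : H →ₗ[ℝ] H), ⟪derivWithin K (Icc 0 1) l₀ u, v⟫ = 0) → u = 0) :
    ∃ ε > (0:ℝ), ∀ l : ℝ, 0 < |l - l₀| → |l - l₀| < ε → IsUnit (1 + K l) := by
  have hl₀Icc : l₀ ∈ Icc (0:ℝ) 1 := Ioo_subset_Icc_self hl₀
  have hnhds : 𝓝[Icc 0 1 \ {l₀}] l₀ = 𝓝[≠] l₀ :=
    nhdsWithin_inter_of_mem (mem_nhdsWithin_of_mem_nhds (Icc_mem_nhds hl₀.1 hl₀.2))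
  suffices h : ∀ᶠ l in 𝓝[Icc 0 1 \ {l₀}] l₀, IsUnit (1 + K l) by
    rw [hnhds, eventually_nhdsWithin_iff, Metric.eventually_nhds_iff] at h
    obtain ⟨ε, hε, hunit⟩ := h
    exact ⟨ε, hε, fun l hl hlε ↦ hunit hlε (sub_ne_zero.1 (abs_pos.1 hl))⟩
  by_contra h
  obtain ⟨l, hl, hcross⟩ := exists_seq_forall_of_frequently
    ((not_eventually.1 h).and_eventually self_mem_nhdsWithin)
  choose u hu hker using fun n ↦
    (hcpt _ (hcross n).2.1).exists_norm_eq_one_apply_eq_zero_of_not_isUnit_one_add (hcross n).1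
  have hD : HasDerivWithinAt K (derivWithin K (Icc 0 1) l₀) (Icc 0 1) l₀ :=
    (hK.differentiableOn (by norm_num) l₀ hl₀Icc).hasDerivWithinAt
  obtain ⟨w, hw0, hw, hdeg⟩ := exists_ne_zero_mem_ker_inner_deriv_eq_zero_of_crossings_tendsto hD
    (hcpt l₀ hl₀Icc) (hsa l₀ hl₀Icc).isSymmetric hl hu hker
  exact hw0 (hreg w hw hdeg)

/-- A regular crossing `λ₀` of a `C²` path `λ ↦ L_λ = I + K_λ` of compact selfadjoint
perturbations of the identity is isolated: there is `ε > 0` such that `L_λ` is invertible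
for all `0 < |λ − λ₀| < ε`. -/
theorem regular_crossing_isolated
    (K : ℝ → (H →L[ℝ] H)) (hK : ContDiffOn ℝ 2 K (Icc 0 1))
    (hcpt : ∀ l ∈ Icc (0:ℝ) 1, IsCompactOperator ⇑(K l))
    (hsa : ∀ l ∈ Icc (0:ℝ) 1, IsSelfAdjoint (K l))
    (l₀ : ℝ) (hl₀ : l₀ ∈ Ioo (0:ℝ) 1)
    (hcross : LinearMap.ker ((1 + K l₀ : H →L[ℝ] H) : H →ₗ[ℝ] H) ≠ ⊥)
    (hreg : ∀ u ∈ LinearMap.ker ((1 + K l₀ : H →L[ℝ] H) : H →ₗ[ℝ] H),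
      (∀ v ∈ LinearMap.ker ((1 + K l₀ : H →L[ℝ] H) : H →ₗ[ℝ] H), ⟪derivWithin K (Icc 0 1) l₀ u, v⟫ = 0) → u = 0) :
    ∃ ε > (0:ℝ), ∀ l : ℝ, 0 < |l - l₀| → |l - l₀| < ε → IsUnit (1 + K l) :=
  regular_crossing_isolated_general K hK hcpt hsa l₀ hl₀ hreg
end

section
/- Let H be a real Hilbert space, let L : J → L(H) be a path of bounded selfadjoint operators differentiable (in operator norm) at λ₀ ∈ J, and let U : J → L(H) be a path of orthogonal operators differentiable at λ₀ with U_{λ₀} = I_H. Then for all u, v ∈ ker L_{λ₀}, ⟨(d/dλ)|_{λ=λ₀} (U_λ L_λ U_λ⁻¹) u, v⟩ = ⟨L̇_{λ₀} u, v⟩, where L̇_{λ₀} is the derivative of L at λ₀. -/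
open RealInnerProductSpace

/-
Differentiating `(U_λ L_λ U_λ⁻¹) U_λ = U_λ L_λ` at `λ₀` (where `U_{λ₀} = 1`) gives
`M' = L' + [U', L_{λ₀}]`, with no need to differentiate `λ ↦ U_λ⁻¹`. The commutator term vanishes
as a bilinear form on `ker L_{λ₀}`, because `L_{λ₀}` is selfadjoint and kills both arguments.
-/

theorem HasDerivAt.eq_add_commutator_of_conj {𝔸 : Type*} [NormedRing 𝔸] [NormedAlgebra ℝ 𝔸]
    {U L W : ℝ → 𝔸} {l₀ : ℝ} {U' L' M' : 𝔸} (hU : HasDerivAt U U' l₀) (hL : HasDerivAt L L' l₀)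
    (hW : ∀ᶠ l in nhds l₀, W l * U l = 1) (hU0 : U l₀ = 1)
    (hM : HasDerivAt (fun l => U l * L l * W l) M' l₀) :
    M' = L' + (U' * L l₀ - L l₀ * U') := by
  have hW0 : W l₀ = 1 := by simpa [hU0] using hW.self_of_nhds
  have hMU : HasDerivAt (fun l => U l * L l * W l * U l)
      (M' * U l₀ + U l₀ * L l₀ * W l₀ * U') l₀ := hM.mul hU
  have hUL : HasDerivAt (fun l => U l * L l * W l * U l) (U' * L l₀ + U l₀ * L') l₀ :=
    (hU.mul hL).congr_of_eventuallyEq <| hW.mono fun l hl => by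
      simp only [Pi.mul_apply, mul_assoc, hl, mul_one]
  have key := hMU.unique hUL
  simp only [hU0, hW0, one_mul, mul_one] at key
  rw [eq_sub_of_add_eq key]
  abel

theorem IsSelfAdjoint.inner_commutator_eq_zero_of_mem_ker {E : Type*} [NormedAddCommGroup E]
    [InnerProductSpace ℝ E] [CompleteSpace E] {T : E →L[ℝ] E} (hT : IsSelfAdjoint T) (A : E →L[ℝ] E)
    {u v : E} (hu : T u = 0) (hv : T v = 0) : ⟪(A * T - T * A) u, v⟫ = 0 := by
  have hsymm : ⟪T (A u), v⟫ = ⟪A u, T v⟫ := hT.isSymmetric (A u) v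
  simp [hu, hsymm, hv]

variable {H : Type*} [NormedAddCommGroup H] [InnerProductSpace ℝ H] [CompleteSpace H]

theorem deriv_conjugated_path_on_kernel_general
    (L U W : ℝ → (H →L[ℝ] H)) (l₀ : ℝ)
    (hLsa : ∀ l : ℝ, IsSelfAdjoint (L l))
    (L' : H →L[ℝ] H) (hL : HasDerivAt L L' l₀)
    (hU0 : U l₀ = 1)
    (U' : H →L[ℝ] H) (hU : HasDerivAt U U' l₀)
    (hW : ∀ l : ℝ, W l * U l = 1 ∧ U l * W l = 1)
    (M' : H →L[ℝ] H) (hM : HasDerivAt (fun l => U l * L l * W l) M' l₀) :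
    ∀ u ∈ LinearMap.ker (L l₀ : H →ₗ[ℝ] H), ∀ v ∈ LinearMap.ker (L l₀ : H →ₗ[ℝ] H), ⟪M' u, v⟫ = ⟪L' u, v⟫ := by
  intro u hu v hv
  have hM' : M' = L' + (U' * L l₀ - L l₀ * U') :=
    hU.eq_add_commutator_of_conj hL (.of_forall fun l => (hW l).1) hU0 hM
  rw [hM', add_apply, inner_add_left,
    (hLsa l₀).inner_commutator_eq_zero_of_mem_ker U' hu hv, add_zero]

/-- The derivative of the conjugated path `λ ↦ U_λ L_λ U_λ⁻¹`, as a bilinear form on the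
kernel of `L_{λ₀}`, agrees with the derivative of the path `L`: if `L` is a path of bounded
selfadjoint operators differentiable at `λ₀`, `U` is a path of orthogonal operators (surjective
linear isometries) differentiable at `λ₀` with `U_{λ₀} = I`, and `W_λ = U_λ⁻¹`, then
`⟪(d/dλ)|_{λ₀} (U_λ L_λ U_λ⁻¹) u, v⟫ = ⟪L̇_{λ₀} u, v⟫` for all `u, v ∈ ker L_{λ₀}`. -/
theorem deriv_conjugated_path_on_kernel
    (L U W : ℝ → (H →L[ℝ] H)) (l₀ : ℝ)
    (hLsa : ∀ l : ℝ, IsSelfAdjoint (L l))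
    (L' : H →L[ℝ] H) (hL : HasDerivAt L L' l₀)
    (hUiso : ∀ l : ℝ, (∀ x : H, ‖U l x‖ = ‖x‖) ∧ Function.Surjective ⇑(U l))
    (hU0 : U l₀ = 1)
    (U' : H →L[ℝ] H) (hU : HasDerivAt U U' l₀)
    (hW : ∀ l : ℝ, W l * U l = 1 ∧ U l * W l = 1)
    (M' : H →L[ℝ] H) (hM : HasDerivAt (fun l => U l * L l * W l) M' l₀) :
    ∀ u ∈ LinearMap.ker (L l₀ : H →ₗ[ℝ] H), ∀ v ∈ LinearMap.ker (L l₀ : H →ₗ[ℝ] H), ⟪M' u, v⟫ = ⟪L' u, v⟫ :=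
  deriv_conjugated_path_on_kernel_general L U W l₀ hLsa L' hL hU0 U' hU hW M' hM
end

section
/- Let S : [0,1] → ℝ^{n×n} be a smooth path of symmetric matrices, λ₀ ∈ (0,1), and let u ∈ C²([0,1],ℝⁿ) satisfy u''(x) + λ₀² S(λ₀ x) u(x) = 0 for all x ∈ [0,1], u(0) = 0 and u(1) = 0. Then the function f(λ) = ∫₀¹ λ² ⟨S(λ x) u(x), u(x)⟩ dx, defined for λ in a neighborhood of λ₀ in (0,1), is differentiable at λ₀ and f'(λ₀) = (1/λ₀) ‖u'(1)‖². -/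
/-!
Write `λ` for `l`. Because `u'' = -λ² S(λx) u` and `S(λx)` is self-adjoint, the function
`G(x) = x (‖u'(x)‖² + λ² ⟪S(λx) u(x), u(x)⟫) - ⟪u'(x), u(x)⟫` has derivative
`λ ∂_λ (λ² ⟪S(λx) u(x), u(x)⟫)`. Differentiating under the integral sign therefore gives
`λ f'(λ) = G(1) - G(0)`, which is `‖u'(1)‖²` since `u` vanishes at both endpoints.
-/

open Set MeasureTheory Metric RealInnerProductSpace

lemma ContDiffOn.hasDerivAt_derivWithin_Icc {F : Type*} [NormedAddCommGroup F]
    [NormedSpace ℝ F] {f : ℝ → F} {n : WithTop ℕ∞} {a b x : ℝ}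
    (hf : ContDiffOn ℝ n f (Icc a b)) (hn : n ≠ 0) (hx : x ∈ Ioo a b) :
    HasDerivAt f (derivWithin f (Icc a b) x) x :=
  (hf.differentiableOn hn x (Ioo_subset_Icc_self hx)).hasDerivWithinAt.hasDerivAt
    (Icc_mem_nhds hx.1 hx.2)

namespace intervalIntegral

theorem hasDerivAt_integral_of_continuousOn_deriv {E : Type*} [NormedAddCommGroup E]
    [NormedSpace ℝ E] {F F' : ℝ → ℝ → E} {a b t₀ ε : ℝ} (hab : a ≤ b) (hε : 0 < ε)
    (hF : ∀ t ∈ ball t₀ ε, ContinuousOn (F t) (Icc a b))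
    (hF' : ContinuousOn (Function.uncurry F') (closedBall t₀ ε ×ˢ Icc a b))
    (hdiff : ∀ x ∈ Ioc a b, ∀ t ∈ ball t₀ ε, HasDerivAt (F · x) (F' t x) t) :
    HasDerivAt (fun t => ∫ x in a..b, F t x) (∫ x in a..b, F' t₀ x) t₀ := by
  obtain ⟨C, hC⟩ :=
    ((isCompact_closedBall t₀ ε).prod isCompact_Icc).exists_bound_of_continuousOn hF'
  have hF'₀ : ContinuousOn (F' t₀) (Icc a b) :=
    hF'.comp (continuousOn_const.prodMk continuousOn_id)
      fun x hx => ⟨mem_closedBall_self hε.le, hx⟩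
  rw [← uIoc_of_le hab] at hdiff
  refine (hasDerivAt_integral_of_dominated_loc_of_deriv_le (bound := fun _ => C)
    (ball_mem_nhds t₀ hε) ?_ ?_ ?_ ?_ intervalIntegrable_const
    (ae_of_all _ hdiff)).2
  · filter_upwards [ball_mem_nhds t₀ hε] with t ht
    rw [uIoc_of_le hab]
    exact ((hF t ht).mono Ioc_subset_Icc_self).aestronglyMeasurable measurableSet_Ioc
  · exact (hF t₀ (mem_ball_self hε)).intervalIntegrable_of_Icc hab
  · rw [uIoc_of_le hab]
    exact (hF'₀.mono Ioc_subset_Icc_self).aestronglyMeasurable measurableSet_Ioc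
  · refine ae_of_all _ fun x hx t ht => hC (t, x) ⟨ball_subset_closedBall ht, ?_⟩
    rw [uIoc_of_le hab] at hx
    exact Ioc_subset_Icc_self hx

end intervalIntegral

section Crossing

variable {E : Type*} [NormedAddCommGroup E] [InnerProductSpace ℝ E]

lemma hasDerivAt_sq_mul_inner_apply_comp_mul {S : ℝ → E →L[ℝ] E} {S' : E →L[ℝ] E}
    {t x : ℝ} (v : E) (hS : HasDerivAt S S' (t * x)) :
    HasDerivAt (fun t => t ^ 2 * ⟪S (t * x) v, v⟫)
      (2 * t * ⟪S (t * x) v, v⟫ + t ^ 2 * x * ⟪S' v, v⟫) t := by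
  have hSx : HasDerivAt (fun t => S (t * x)) (x • S') t :=
    hS.scomp_of_eq t (hasDerivAt_mul_const x) rfl
  have hq := (hSx.clm_apply (hasDerivAt_const t v)).inner ℝ (hasDerivAt_const t v)
  refine ((hasDerivAt_pow 2 t).mul hq).congr_deriv ?_
  simp only [inner_zero_right, map_zero, add_zero, zero_add, FunLike.coe_smul, Pi.smul_apply,
    real_inner_smul_left]
  ring

lemma hasDerivAt_jacobi_energy_primitive [CompleteSpace E] {S : ℝ → E →L[ℝ] E} {S' : E →L[ℝ] E}
    {u u' : ℝ → E} {u'' : E} {l x : ℝ} (hS : HasDerivAt S S' (l * x))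
    (hsym : IsSelfAdjoint (S (l * x))) (hu : HasDerivAt u (u' x) x) (hu' : HasDerivAt u' u'' x)
    (hode : u'' + l ^ 2 • S (l * x) (u x) = 0) :
    HasDerivAt (fun x => x * (‖u' x‖ ^ 2 + l ^ 2 * ⟪S (l * x) (u x), u x⟫) - ⟪u' x, u x⟫)
      (l * (2 * l * ⟪S (l * x) (u x), u x⟫ + l ^ 2 * x * ⟪S' (u x), u x⟫)) x := by
  have hSx : HasDerivAt (fun x => S (l * x)) (l • S') x := hS.scomp x (hasDerivAt_const_mul l)
  have hq := (hSx.clm_apply hu).inner ℝ hu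
  refine (((hasDerivAt_id x).mul (hu'.norm_sq.add (hq.const_mul (l ^ 2)))).sub
    (hu'.inner ℝ hu)).congr_deriv ?_
  obtain rfl : u'' = -(l ^ 2 • S (l * x) (u x)) := eq_neg_of_add_eq_zero_left hode
  have hsymm : ⟪S (l * x) (u' x), u x⟫ = ⟪S (l * x) (u x), u' x⟫ := by
    simpa [real_inner_comm] using
      ContinuousLinearMap.isSelfAdjoint_iff_isSymmetric.mp hsym (u' x) (u x)
  simp only [id, inner_add_left, inner_neg_left, inner_neg_right, real_inner_smul_left,
    real_inner_smul_right, Pi.add_apply, FunLike.coe_smul, Pi.smul_apply,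
    hsymm, real_inner_self_eq_norm_sq, real_inner_comm (u' x)]
  ring

lemma continuousOn_inner_apply_comp_mul {T : ℝ → E →L[ℝ] E} {u : ℝ → E} {K : Set ℝ}
    (hT : ContinuousOn T (Icc 0 1)) (hu : ContinuousOn u (Icc 0 1)) (hK : K ⊆ Icc 0 1) :
    ContinuousOn (fun p : ℝ × ℝ => ⟪T (p.1 * p.2) (u p.2), u p.2⟫) (K ×ˢ Icc 0 1) := by
  have hmaps : MapsTo (fun p : ℝ × ℝ => p.1 * p.2) (K ×ˢ Icc 0 1) (Icc 0 1) :=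
    fun p ⟨hp₁, hp₂⟩ => unitInterval.mul_mem (hK hp₁) hp₂
  have hu₂ : ContinuousOn (fun p : ℝ × ℝ => u p.2) (K ×ˢ Icc 0 1) :=
    hu.comp continuousOn_snd fun p hp => hp.2
  exact ((hT.comp (continuous_fst.mul continuous_snd).continuousOn hmaps).clm_apply hu₂).inner hu₂

lemma continuousOn_inner_apply_comp_const_mul {T : ℝ → E →L[ℝ] E} {u : ℝ → E} {l : ℝ}
    (hT : ContinuousOn T (Icc 0 1)) (hu : ContinuousOn u (Icc 0 1)) (hl : l ∈ Icc (0:ℝ) 1) :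
    ContinuousOn (fun x => ⟪T (l * x) (u x), u x⟫) (Icc 0 1) :=
  (continuousOn_inner_apply_comp_mul hT hu (singleton_subset_iff.2 hl)).comp
    (continuousOn_const.prodMk continuousOn_id) fun _ hx => ⟨rfl, hx⟩

theorem integral_deriv_sq_mul_inner_eq_of_jacobi [CompleteSpace E] {S : ℝ → E →L[ℝ] E}
    (hS : ContDiffOn ℝ 1 S (Icc 0 1)) (hsym : ∀ x ∈ Icc (0:ℝ) 1, IsSelfAdjoint (S x))
    {l : ℝ} (hl : l ∈ Ioc (0:ℝ) 1) {u : ℝ → E} (hu : ContDiffOn ℝ 2 u (Icc 0 1))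
    (hode : ∀ x ∈ Ioo (0:ℝ) 1,
      derivWithin (derivWithin u (Icc 0 1)) (Icc 0 1) x + l ^ 2 • S (l * x) (u x) = 0)
    (hu0 : u 0 = 0) (hu1 : u 1 = 0) :
    ∫ x in (0:ℝ)..1, (2 * l * ⟪S (l * x) (u x), u x⟫
        + l ^ 2 * x * ⟪derivWithin S (Icc 0 1) (l * x) (u x), u x⟫)
      = 1 / l * ‖derivWithin u (Icc 0 1) 1‖ ^ 2 := by
  set u' := derivWithin u (Icc 0 1)
  have hu'C1 : ContDiffOn ℝ 1 u' (Icc 0 1) := hu.derivWithin (uniqueDiffOn_Icc one_pos) le_rfl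
  have hlI : l ∈ Icc (0:ℝ) 1 := Ioc_subset_Icc_self hl
  have hlx : ∀ x ∈ Ioo (0:ℝ) 1, l * x ∈ Ioo (0:ℝ) 1 := fun x hx =>
    ⟨mul_pos hl.1 hx.1, mul_lt_one_of_nonneg_of_lt_one_right hl.2 hx.1.le hx.2⟩
  have hSu := continuousOn_inner_apply_comp_const_mul hS.continuousOn hu.continuousOn hlI
  have hS'u := continuousOn_inner_apply_comp_const_mul
    (hS.continuousOn_derivWithin (uniqueDiffOn_Icc one_pos) le_rfl) hu.continuousOn hlI
  have hprimitive := intervalIntegral.integral_eq_sub_of_hasDerivAt_of_le zero_le_one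
    (f := fun x => x * (‖u' x‖ ^ 2 + l ^ 2 * ⟪S (l * x) (u x), u x⟫) - ⟪u' x, u x⟫)
    (continuousOn_id.mul ((hu'C1.continuousOn.norm.pow 2).add (continuousOn_const.mul hSu))
      |>.sub (hu'C1.continuousOn.inner hu.continuousOn))
    (fun x hx => hasDerivAt_jacobi_energy_primitive
      (hS.hasDerivAt_derivWithin_Icc one_ne_zero (hlx x hx))
      (hsym _ (Ioo_subset_Icc_self (hlx x hx))) (hu.hasDerivAt_derivWithin_Icc two_ne_zero hx)
      (hu'C1.hasDerivAt_derivWithin_Icc one_ne_zero hx) (hode x hx))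
    ((continuousOn_const.mul ((continuousOn_const.mul hSu).add
      ((continuousOn_const.mul continuousOn_id).mul hS'u))).intervalIntegrable_of_Icc zero_le_one)
  rw [intervalIntegral.integral_const_mul] at hprimitive
  simp only [hu0, hu1, inner_zero_right, map_zero, zero_mul, one_mul, mul_zero,
    add_zero, sub_zero] at hprimitive
  rw [one_div, eq_inv_mul_iff_mul_eq₀ hl.1.ne', hprimitive]

theorem hasDerivAt_integral_sq_mul_inner_apply_comp_mul {S : ℝ → E →L[ℝ] E}
    (hS : ContDiffOn ℝ 1 S (Icc 0 1)) {u : ℝ → E} (hu : ContinuousOn u (Icc 0 1)) {l : ℝ}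
    (hl : l ∈ Ioo (0:ℝ) 1) :
    HasDerivAt (fun l => ∫ x in (0:ℝ)..1, l ^ 2 * ⟪S (l * x) (u x), u x⟫)
      (∫ x in (0:ℝ)..1, (2 * l * ⟪S (l * x) (u x), u x⟫
        + l ^ 2 * x * ⟪derivWithin S (Icc 0 1) (l * x) (u x), u x⟫)) l := by
  set ε := min l (1 - l)
  have hε : 0 < ε := lt_min hl.1 (sub_pos.2 hl.2)
  have hball : ball l ε ⊆ Ioo 0 1 := by
    rw [Real.ball_eq_Ioo]
    exact Ioo_subset_Ioo (by linarith [min_le_left l (1 - l)])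
      (by linarith [min_le_right l (1 - l)])
  have hclosedBall : closedBall l ε ⊆ Icc 0 1 := by
    rw [Real.closedBall_eq_Icc]
    exact Icc_subset_Icc (by linarith [min_le_left l (1 - l)])
      (by linarith [min_le_right l (1 - l)])
  refine intervalIntegral.hasDerivAt_integral_of_continuousOn_deriv zero_le_one hε
    (fun t ht => continuousOn_const.mul (continuousOn_inner_apply_comp_const_mul hS.continuousOn
      hu (hclosedBall (ball_subset_closedBall ht)))) ?_
    (fun x hx t ht => hasDerivAt_sq_mul_inner_apply_comp_mul (u x)
      (hS.hasDerivAt_derivWithin_Icc one_ne_zero ⟨mul_pos (hball ht).1 hx.1,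
        mul_lt_one_of_nonneg_of_lt_one_left (hball ht).1.le (hball ht).2 hx.2⟩))
  exact ((continuousOn_const.mul continuousOn_fst).mul
      (continuousOn_inner_apply_comp_mul hS.continuousOn hu hclosedBall)).add
    (((continuousOn_fst.pow 2).mul continuousOn_snd).mul (continuousOn_inner_apply_comp_mul
      (hS.continuousOn_derivWithin (uniqueDiffOn_Icc one_pos) le_rfl) hu hclosedBall))

end Crossing

/-- The crossing-form computation: if `u` is a `C²` solution of the reparametrized Jacobi
boundary value problem `u'' + λ₀² S(λ₀ x) u = 0` on `[0,1]` with `u 0 = u 1 = 0`, then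
`f(λ) = ∫₀¹ λ² ⟪S(λx) u(x), u(x)⟫ dx` is differentiable at `λ₀` with
`f'(λ₀) = (1/λ₀) ‖u'(1)‖²`. -/
theorem crossing_form_derivative {n : ℕ}
    (S : ℝ → (EuclideanSpace ℝ (Fin n) →L[ℝ] EuclideanSpace ℝ (Fin n)))
    (hS : ContDiffOn ℝ (⊤ : ℕ∞) S (Icc 0 1))
    (hsym : ∀ x ∈ Icc (0:ℝ) 1, IsSelfAdjoint (S x))
    (l₀ : ℝ) (hl₀ : l₀ ∈ Ioo (0:ℝ) 1)
    (u : ℝ → EuclideanSpace ℝ (Fin n))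
    (hu : ContDiffOn ℝ 2 u (Icc 0 1))
    (hode : ∀ x ∈ Icc (0:ℝ) 1,
      derivWithin (derivWithin u (Icc 0 1)) (Icc 0 1) x + (l₀ ^ 2) • S (l₀ * x) (u x) = 0)
    (hu0 : u 0 = 0) (hu1 : u 1 = 0) :
    HasDerivAt (fun l : ℝ => ∫ x in (0:ℝ)..1, l ^ 2 * ⟪S (l * x) (u x), u x⟫)
      ((1 / l₀) * ‖derivWithin u (Icc 0 1) 1‖ ^ 2) l₀ := by
  have hS₁ : ContDiffOn ℝ 1 S (Icc 0 1) := hS.of_le (by exact_mod_cast le_top)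
  rw [← integral_deriv_sq_mul_inner_eq_of_jacobi hS₁ hsym (Ioo_subset_Ioc_self hl₀) hu
    (fun x hx => hode x (Ioo_subset_Icc_self hx)) hu0 hu1]
  exact hasDerivAt_integral_sq_mul_inner_apply_comp_mul hS₁ hu.continuousOn hl₀
end
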